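/- arXiv:1805.09805 — 7 statements merged into one kernel-verified Lean document; each statement's English description precedes it below -/
import Mathlib

section
/- Let A be an associative F-algebra containing a non-zero finite-dimensional semisimple subalgebra S. Suppose that A is generated by S as a two-sided ideal (i.e. the smallest two-sided ideal of A containing S equals A), and that S is 1-perfect if p ≠ 2, or 4-perfect if p = 2. Then the derived subalgebra A^(1) is a perfect Lie algebra: [A^(1), A^(1)] = A^(1). -/
/-!
Statement 0: if the associative `F`-algebra `A` contains a non-zero finite-dimensional
semisimple subalgebra `S`, `A` is generated by `S` as a two-sided ideal, and `S` is
1-perfect when `char F ≠ 2` (resp. 4-perfect when `char F = 2`), then the derived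
subalgebra `A⁽¹⁾` (the span of all commutators) is a perfect Lie algebra.
-/

universe u v

/-- An `F`-algebra (possibly non-unital) is `k`-perfect if it has no proper two-sided
ideal of codimension at most `k`. -/
def kPerfect (F : Type u) (A : Type v) [Field F] [NonUnitalRing A] [Module F A]
    (k : ℕ) : Prop :=
  ∀ J : Submodule F A, (∀ a : A, ∀ x ∈ J, a * x ∈ J ∧ x * a ∈ J) → J ≠ ⊤ →
    ¬ (Module.rank F (A ⧸ J) ≤ (k : Cardinal))

/-- A non-unital `F`-algebra is (finite-dimensional) semisimple iff it is isomorphic,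
as a non-unital `F`-algebra, to a finite direct sum of full matrix algebras over `F`. -/
def IsMatrixSemisimple (F : Type u) (S : Type v) [Field F] [NonUnitalRing S]
    [Module F S] : Prop :=
  ∃ (m : ℕ) (n : Fin m → ℕ) (_hn : ∀ i, 0 < n i)
    (f : S →ₙₐ[F] ∀ i, Matrix (Fin (n i)) (Fin (n i)) F), Function.Bijective f

/-- The derived subalgebra `A⁽¹⁾`: the `F`-linear span of all commutators. -/
def derivedSub (F : Type u) (A : Type v) [Field F] [NonUnitalRing A] [Module F A] :
    Submodule F A :=
  Submodule.span F {z : A | ∃ x y : A, z = x * y - y * x}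

/-!
Let `N = [A⁽¹⁾, A⁽¹⁾]`. It is a Lie ideal of `A`, so `Z = {z | [z, A] ⊆ N}` is closed under
multiplication, and it suffices to show `Z = A`. The perfectness hypothesis rules out blocks of
size `1` (resp. `≤ 2` when `p = 2`), so every off-diagonal matrix unit of `S` lies in `N`:
`2 e_rc = [e_rc, e_cc - e_rr]`, resp. `e_rc = [e_rw, e_wc]` for a third index `w`. From
`[p, q] a = [p, q a] - [q, p a] + [q, a p] + [a, p] q` one gets `[p, q] A ⊆ Z` for `p, q ∈ Z`,
and then `e_rr A ⊆ Z` via `e_rr = ½ (h + h²)` with `h = e_rr - e_tt = [e_rt, e_tr]`, resp.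
`e_rr = (e_uu - e_rr)(e_vv - e_rr)`. Summing, the unit `1_S` satisfies `1_S A ⊆ Z` and
`A 1_S ⊆ Z`, so `A S A ⊆ Z`: the largest two-sided ideal inside `Z` contains `S`, hence is `A`.
-/

local notation "⁅" x ", " y "⁆ₐ" => x * y - y * x

section Commutators

variable {F : Type*} [Field F] {A : Type*} [NonUnitalRing A] [Module F A]

def secondDerivedSub (F : Type*) (A : Type*) [Field F] [NonUnitalRing A] [Module F A] :
    Submodule F A :=
  Submodule.span F {z : A | ∃ x ∈ derivedSub F A, ∃ y ∈ derivedSub F A, z = ⁅x, y⁆ₐ}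

theorem commutator_mem_derivedSub (x y : A) : ⁅x, y⁆ₐ ∈ derivedSub F A :=
  Submodule.subset_span ⟨x, y, rfl⟩

theorem commutator_mem_secondDerivedSub {x y : A} (hx : x ∈ derivedSub F A)
    (hy : y ∈ derivedSub F A) : ⁅x, y⁆ₐ ∈ secondDerivedSub F A :=
  Submodule.subset_span ⟨x, hx, y, hy, rfl⟩

theorem secondDerivedSub_le_derivedSub : secondDerivedSub F A ≤ derivedSub F A :=
  Submodule.span_le.mpr fun _ ⟨x, _, y, _, hz⟩ => hz ▸ commutator_mem_derivedSub x y

end Commutators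

section Colon

variable {F : Type*} [Field F] {A : Type*} [NonUnitalRing A] [Module F A] [IsScalarTower F A A]

def rightColon (M : Submodule F A) : Submodule F A :=
  ⨅ a : A, M.comap (LinearMap.mulRight F a)

theorem mem_rightColon {M : Submodule F A} {z : A} : z ∈ rightColon M ↔ ∀ a, z * a ∈ M := by
  simp [rightColon]

end Colon

section Core

variable {F : Type*} [Field F] {A : Type*} [NonUnitalRing A] [Module F A]
  [SMulCommClass F A A] [IsScalarTower F A A]

/-- The largest two-sided ideal contained in `M`. -/
def twoSidedCore (M : Submodule F A) : Submodule F A :=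
  M ⊓ (⨅ a : A, M.comap (LinearMap.mulLeft F a)) ⊓ rightColon M ⊓
    ⨅ a : A, ⨅ b : A, M.comap (LinearMap.mulLeft F a ∘ₗ LinearMap.mulRight F b)

theorem mem_twoSidedCore {M : Submodule F A} {z : A} :
    z ∈ twoSidedCore M ↔
      z ∈ M ∧ (∀ a, a * z ∈ M) ∧ (∀ b, z * b ∈ M) ∧ ∀ a b, a * z * b ∈ M := by
  simp [twoSidedCore, mem_rightColon, mul_assoc, and_assoc]

theorem twoSidedCore_le (M : Submodule F A) : twoSidedCore M ≤ M :=
  fun _ hz => (mem_twoSidedCore.mp hz).1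

theorem mul_mem_twoSidedCore (M : Submodule F A) (a : A) {x : A} (hx : x ∈ twoSidedCore M) :
    a * x ∈ twoSidedCore M ∧ x * a ∈ twoSidedCore M := by
  obtain ⟨hx, hax, hxb, haxb⟩ := mem_twoSidedCore.mp hx
  refine ⟨mem_twoSidedCore.mpr ⟨hax a, fun c => ?_, fun b => haxb a b, fun c b => ?_⟩,
    mem_twoSidedCore.mpr ⟨hxb a, fun c => ?_, fun b => ?_, fun c b => ?_⟩⟩
  · simpa [mul_assoc] using hax (c * a)
  · simpa [mul_assoc] using haxb (c * a) b
  · simpa [mul_assoc] using haxb c a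
  · simpa [mul_assoc] using hxb (a * b)
  · simpa [mul_assoc] using haxb c (a * b)

theorem mem_twoSidedCore_of_mul_eq_self {M : Submodule F A}
    (hM : ∀ x ∈ M, ∀ y ∈ M, x * y ∈ M) {e z : A} (he : e ∈ rightColon M)
    (he' : ∀ a, a * e ∈ M) (hz : e * z = z) : z ∈ twoSidedCore M := by
  have hzb : ∀ b, z * b ∈ M := fun b => by
    simpa only [← mul_assoc, hz] using mem_rightColon.mp he (z * b)
  have hzM : z ∈ M := hz ▸ mem_rightColon.mp he z
  refine mem_twoSidedCore.mpr ⟨hzM, fun a => ?_, hzb, fun a b => ?_⟩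
  · simpa only [mul_assoc, hz] using hM _ (he' a) _ hzM
  · have h : a * z * b = a * e * (z * b) := by rw [mul_assoc a e, ← mul_assoc e, hz, mul_assoc]
    exact h ▸ hM _ (he' a) _ (hzb b)

end Core

section LieIdeal

variable {F : Type*} [Field F] {A : Type*} [NonUnitalRing A] [Module F A]
  [SMulCommClass F A A] [IsScalarTower F A A]

theorem commutator_mem_secondDerivedSub_of_mem_right (a : A) {x : A}
    (hx : x ∈ secondDerivedSub F A) : ⁅a, x⁆ₐ ∈ secondDerivedSub F A := by
  let ad : A →ₗ[F] A := LinearMap.mulLeft F a - LinearMap.mulRight F a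
  suffices secondDerivedSub F A ≤ (secondDerivedSub F A).comap ad from this hx
  refine Submodule.span_le.mpr ?_
  rintro _ ⟨u, hu, v, hv, rfl⟩
  have jacobi : ⁅a, ⁅u, v⁆ₐ⁆ₐ = ⁅⁅a, u⁆ₐ, v⁆ₐ + ⁅u, ⁅a, v⁆ₐ⁆ₐ := by noncomm_ring
  simp only [SetLike.mem_coe, Submodule.mem_comap, ad, LinearMap.sub_apply,
    LinearMap.mulLeft_apply, LinearMap.mulRight_apply, jacobi]
  exact add_mem (commutator_mem_secondDerivedSub (commutator_mem_derivedSub a u) hv)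
    (commutator_mem_secondDerivedSub hu (commutator_mem_derivedSub a v))

/-- The preimage of the centre of the Lie algebra `A / A⁽²⁾`. -/
def centerModSecondDerived (F : Type*) (A : Type*) [Field F] [NonUnitalRing A] [Module F A]
    [SMulCommClass F A A] [IsScalarTower F A A] : Submodule F A :=
  ⨅ c : A, (secondDerivedSub F A).comap (LinearMap.mulRight F c - LinearMap.mulLeft F c)

theorem mem_centerModSecondDerived {z : A} :
    z ∈ centerModSecondDerived F A ↔ ∀ c, ⁅z, c⁆ₐ ∈ secondDerivedSub F A := by
  simp [centerModSecondDerived]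

theorem secondDerivedSub_le_centerModSecondDerived :
    secondDerivedSub F A ≤ centerModSecondDerived F A := fun x hx =>
  mem_centerModSecondDerived.mpr fun c => by
    simpa using neg_mem (commutator_mem_secondDerivedSub_of_mem_right c hx)

theorem secondDerivedSub_eq_derivedSub (h : centerModSecondDerived F A = ⊤) :
    secondDerivedSub F A = derivedSub F A := by
  refine le_antisymm secondDerivedSub_le_derivedSub (Submodule.span_le.mpr ?_)
  rintro _ ⟨x, y, rfl⟩
  exact mem_centerModSecondDerived.mp (h ▸ Submodule.mem_top) y

theorem commutator_mem_centerModSecondDerived {z : A} (hz : z ∈ centerModSecondDerived F A)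
    (c : A) : ⁅z, c⁆ₐ ∈ centerModSecondDerived F A :=
  secondDerivedSub_le_centerModSecondDerived (mem_centerModSecondDerived.mp hz c)

theorem mul_mem_centerModSecondDerived {x y : A} (hx : x ∈ centerModSecondDerived F A)
    (hy : y ∈ centerModSecondDerived F A) : x * y ∈ centerModSecondDerived F A := by
  refine mem_centerModSecondDerived.mpr fun c => ?_
  have h : ⁅x * y, c⁆ₐ = ⁅x, y * c⁆ₐ + ⁅y, c * x⁆ₐ := by noncomm_ring
  rw [h]
  exact add_mem (mem_centerModSecondDerived.mp hx _) (mem_centerModSecondDerived.mp hy _)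

theorem mul_mem_rightColon_centerModSecondDerived {x y : A}
    (hx : x ∈ centerModSecondDerived F A) (hy : y ∈ rightColon (centerModSecondDerived F A)) :
    x * y ∈ rightColon (centerModSecondDerived F A) := by
  refine mem_rightColon.mpr fun a => mem_centerModSecondDerived.mpr fun c => ?_
  have h : ⁅x * y * a, c⁆ₐ = ⁅x, y * a * c⁆ₐ + ⁅y * a, c * x⁆ₐ := by noncomm_ring
  rw [h]
  exact add_mem (mem_centerModSecondDerived.mp hx _)
    (mem_centerModSecondDerived.mp (mem_rightColon.mp hy a) _)

theorem commutator_mem_rightColon_centerModSecondDerived {p q : A}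
    (hp : p ∈ centerModSecondDerived F A) (hq : q ∈ centerModSecondDerived F A) :
    ⁅p, q⁆ₐ ∈ rightColon (centerModSecondDerived F A) := by
  refine mem_rightColon.mpr fun a => ?_
  have h : ⁅p, q⁆ₐ * a = ⁅p, q * a⁆ₐ - ⁅q, p * a⁆ₐ + ⁅q, a * p⁆ₐ + ⁅a, p⁆ₐ * q := by
    noncomm_ring
  have hap : ⁅a, p⁆ₐ ∈ centerModSecondDerived F A := by
    simpa using neg_mem (commutator_mem_centerModSecondDerived hp a)
  rw [h]
  exact add_mem (add_mem (sub_mem (commutator_mem_centerModSecondDerived hp _)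
    (commutator_mem_centerModSecondDerived hq _)) (commutator_mem_centerModSecondDerived hq _))
    (mul_mem_centerModSecondDerived hap hq)

theorem mul_mem_centerModSecondDerived_of_mem_rightColon {e : A}
    (he : e ∈ centerModSecondDerived F A) (he' : e ∈ rightColon (centerModSecondDerived F A))
    (a : A) : a * e ∈ centerModSecondDerived F A := by
  have h : a * e = e * a - ⁅e, a⁆ₐ := by noncomm_ring
  rw [h]
  exact sub_mem (mem_rightColon.mp he' a) (commutator_mem_centerModSecondDerived he a)

end LieIdeal

theorem map_commutator {F A B : Type*} [Field F] [NonUnitalRing A] [Module F A]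
    [NonUnitalRing B] [Module F B] (ψ : B →ₙₐ[F] A) (x y : B) :
    ψ ⁅x, y⁆ₐ = ⁅ψ x, ψ y⁆ₐ := by
  simp only [map_sub, map_mul]

theorem Fintype.exists_ne_ne_of_two_lt_card {ι : Type*} [Fintype ι] [DecidableEq ι]
    (h : 2 < Fintype.card ι) (a b : ι) : ∃ w, w ≠ a ∧ w ≠ b := by
  have hlt : ({a, b} : Finset ι).card < Finset.univ.card :=
    (Finset.card_le_two).trans_lt h
  obtain ⟨w, -, hw⟩ := Finset.exists_mem_notMem_of_card_lt_card hlt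
  exact ⟨w, by simp_all⟩

section MatrixUnits

variable {F : Type*} [Field F] {A : Type*} [NonUnitalRing A] [Module F A]
  {ι : Type*} [Fintype ι] [DecidableEq ι] (ψ : Matrix ι ι F →ₙₐ[F] A)

theorem Matrix.single_sub_single_eq_commutator (r c : ι) :
    single r r (1 : F) - single c c 1 = ⁅single r c (1 : F), single c r 1⁆ₐ := by
  simp

theorem map_single_mem_derivedSub {r c : ι} (hrc : r ≠ c) :
    ψ (Matrix.single r c 1) ∈ derivedSub F A := by
  have h : Matrix.single r c (1 : F) = ⁅Matrix.single r r (1 : F), Matrix.single r c 1⁆ₐ := by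
    simp [hrc.symm]
  rw [h, map_commutator]
  exact commutator_mem_derivedSub _ _

theorem map_single_sub_single_mem_secondDerivedSub {r c : ι} (hrc : r ≠ c) :
    ψ (Matrix.single r r 1 - Matrix.single c c 1) ∈ secondDerivedSub F A := by
  rw [Matrix.single_sub_single_eq_commutator, map_commutator]
  exact commutator_mem_secondDerivedSub (map_single_mem_derivedSub ψ hrc)
    (map_single_mem_derivedSub ψ hrc.symm)

theorem map_single_mem_secondDerivedSub_of_ne {r c w : ι} (hrw : r ≠ w) (hwc : w ≠ c)
    (hrc : r ≠ c) : ψ (Matrix.single r c 1) ∈ secondDerivedSub F A := by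
  have h : Matrix.single r c (1 : F) = ⁅Matrix.single r w (1 : F), Matrix.single w c 1⁆ₐ := by
    simp [hrc.symm]
  rw [h, map_commutator]
  exact commutator_mem_secondDerivedSub (map_single_mem_derivedSub ψ hrw)
    (map_single_mem_derivedSub ψ hwc)

variable [SMulCommClass F A A] [IsScalarTower F A A]

theorem map_single_mem_secondDerivedSub_of_two_ne_zero (h2 : (2 : F) ≠ 0) {r c : ι}
    (hrc : r ≠ c) : ψ (Matrix.single r c 1) ∈ secondDerivedSub F A := by
  have h : (2 : F) • Matrix.single r c (1 : F) =
      ⁅Matrix.single r c (1 : F), Matrix.single c c 1 - Matrix.single r r 1⁆ₐ := by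
    simp [hrc.symm, mul_sub, sub_mul, two_smul]
  refine (Submodule.smul_mem_iff _ h2).mp ?_
  rw [← map_smul, h, map_commutator]
  exact commutator_mem_secondDerivedSub_of_mem_right _
    (map_single_sub_single_mem_secondDerivedSub ψ hrc.symm)

theorem map_single_sub_single_mem_rightColon {r c : ι}
    (hrc : ψ (Matrix.single r c 1) ∈ centerModSecondDerived F A)
    (hcr : ψ (Matrix.single c r 1) ∈ centerModSecondDerived F A) :
    ψ (Matrix.single r r 1 - Matrix.single c c 1) ∈ rightColon (centerModSecondDerived F A) := by
  rw [Matrix.single_sub_single_eq_commutator, map_commutator]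
  exact commutator_mem_rightColon_centerModSecondDerived hrc hcr

theorem map_single_mem_rightColon_of_two_ne_zero (h2 : (2 : F) ≠ 0) {r t : ι} (hrt : r ≠ t)
    (hrt' : ψ (Matrix.single r t 1) ∈ centerModSecondDerived F A)
    (htr' : ψ (Matrix.single t r 1) ∈ centerModSecondDerived F A) :
    ψ (Matrix.single r r 1) ∈ rightColon (centerModSecondDerived F A) := by
  set X := Matrix.single r r (1 : F) - Matrix.single t t 1
  have hXL : ψ X ∈ rightColon (centerModSecondDerived F A) :=
    map_single_sub_single_mem_rightColon ψ hrt' htr'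
  have hXZ : ψ X ∈ centerModSecondDerived F A :=
    secondDerivedSub_le_centerModSecondDerived (map_single_sub_single_mem_secondDerivedSub ψ hrt)
  have h : (2 : F) • Matrix.single r r (1 : F) = X + X * X := by
    simp [X, hrt, hrt.symm, mul_sub, sub_mul, two_smul]
  refine (Submodule.smul_mem_iff _ h2).mp ?_
  rw [← map_smul, h, map_add, map_mul]
  exact add_mem hXL (mul_mem_rightColon_centerModSecondDerived hXZ hXL)

theorem map_single_mem_rightColon_of_ne {r u v : ι} (hur : u ≠ r) (hvr : v ≠ r) (huv : u ≠ v)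
    (hrv' : ψ (Matrix.single r v 1) ∈ centerModSecondDerived F A)
    (hvr' : ψ (Matrix.single v r 1) ∈ centerModSecondDerived F A) :
    ψ (Matrix.single r r 1) ∈ rightColon (centerModSecondDerived F A) := by
  have h : Matrix.single r r (1 : F) =
      (Matrix.single u u 1 - Matrix.single r r 1) *
        (Matrix.single v v 1 - Matrix.single r r 1) := by
    simp [hur, huv, hvr.symm, mul_sub, sub_mul]
  rw [h, map_mul]
  exact mul_mem_rightColon_centerModSecondDerived
    (secondDerivedSub_le_centerModSecondDerived (map_single_sub_single_mem_secondDerivedSub ψ hur))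
    (map_single_sub_single_mem_rightColon ψ hvr' hrv')

theorem map_one_mem_rightColon
    (h : 2 < Fintype.card ι ∨ 1 < Fintype.card ι ∧ (2 : F) ≠ 0) :
    ψ 1 ∈ rightColon (centerModSecondDerived F A) := by
  rw [← Matrix.sum_single_one, map_sum]
  refine Submodule.sum_mem _ fun r _ => ?_
  rcases h with h3 | ⟨h2', h2⟩
  · have hoff : ∀ {r c : ι}, r ≠ c → ψ (Matrix.single r c 1) ∈ centerModSecondDerived F A :=
      fun {r c} hrc =>
        have ⟨w, hwr, hwc⟩ := Fintype.exists_ne_ne_of_two_lt_card h3 r c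
        secondDerivedSub_le_centerModSecondDerived
          (map_single_mem_secondDerivedSub_of_ne ψ hwr.symm hwc hrc)
    obtain ⟨u, hur⟩ := Fintype.exists_ne_of_one_lt_card (by omega) r
    obtain ⟨v, hvr, hvu⟩ := Fintype.exists_ne_ne_of_two_lt_card h3 r u
    exact map_single_mem_rightColon_of_ne ψ hur hvr hvu.symm (hoff hvr.symm) (hoff hvr)
  · have hoff : ∀ {r c : ι}, r ≠ c → ψ (Matrix.single r c 1) ∈ centerModSecondDerived F A :=
      fun hrc => secondDerivedSub_le_centerModSecondDerived
        (map_single_mem_secondDerivedSub_of_two_ne_zero ψ h2 hrc)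
    obtain ⟨t, htr⟩ := Fintype.exists_ne_of_one_lt_card h2' r
    exact map_single_mem_rightColon_of_two_ne_zero ψ h2 htr.symm (hoff htr.symm) (hoff htr)

end MatrixUnits

def Pi.singleNonUnitalAlgHom (R : Type*) [Monoid R] {ι : Type*} [DecidableEq ι]
    (B : ι → Type*) [∀ i, NonUnitalNonAssocSemiring (B i)] [∀ i, DistribMulAction R (B i)]
    (i : ι) : B i →ₙₐ[R] ∀ i, B i where
  toFun := Pi.single i
  map_smul' := Pi.single_smul i
  map_zero' := Pi.single_zero i
  map_add' := Pi.single_add i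
  map_mul' := Pi.single_mul i

theorem map_one_mem_rightColon_of_pi {F : Type*} [Field F] {A : Type*} [NonUnitalRing A]
    [Module F A] [SMulCommClass F A A] [IsScalarTower F A A] {ι : Type*} [Fintype ι]
    [DecidableEq ι] {κ : ι → Type*} [∀ i, Fintype (κ i)] [∀ i, DecidableEq (κ i)]
    (φ : (∀ i, Matrix (κ i) (κ i) F) →ₙₐ[F] A)
    (h : ∀ i, 2 < Fintype.card (κ i) ∨ 1 < Fintype.card (κ i) ∧ (2 : F) ≠ 0) :
    φ 1 ∈ rightColon (centerModSecondDerived F A) := by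
  rw [← Finset.univ_sum_single (1 : ∀ i, Matrix (κ i) (κ i) F), map_sum]
  exact Submodule.sum_mem _ fun i _ =>
    map_one_mem_rightColon
      (φ.comp (Pi.singleNonUnitalAlgHom F (fun i => Matrix (κ i) (κ i) F) i)) (h i)

theorem kPerfect.lt_finrank_of_surjective {F S B : Type*} [Field F] [NonUnitalRing S]
    [Module F S] [NonUnitalNonAssocRing B] [Module F B] [Nontrivial B] [FiniteDimensional F B]
    {k : ℕ} (hS : kPerfect F S k) (g : S →ₙₐ[F] B) (hg : Function.Surjective g) :
    k < Module.finrank F B := by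
  let π : S →ₗ[F] B := g
  have hideal : ∀ a : S, ∀ x ∈ LinearMap.ker π, a * x ∈ LinearMap.ker π ∧ x * a ∈ LinearMap.ker π :=
    fun a x hx => by simp_all [π]
  have hproper : LinearMap.ker π ≠ ⊤ := fun htop => by
    obtain ⟨b, hb⟩ := exists_ne (0 : B)
    obtain ⟨s, rfl⟩ := hg b
    exact hb (LinearMap.mem_ker.mp (htop ▸ Submodule.mem_top : s ∈ LinearMap.ker π))
  let e := π.quotKerEquivOfSurjective hg
  have : FiniteDimensional F (S ⧸ LinearMap.ker π) := e.symm.finiteDimensional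
  by_contra hle
  refine hS _ hideal hproper ?_
  rw [← Module.finrank_eq_rank, e.finrank_eq]
  exact_mod_cast not_lt.mp hle

theorem kPerfect.lt_mul_self {F S : Type*} [Field F] [NonUnitalRing S] [Module F S] {k m : ℕ}
    {n : Fin m → ℕ} (hS : kPerfect F S k) (f : S →ₙₐ[F] ∀ i, Matrix (Fin (n i)) (Fin (n i)) F)
    (hf : Function.Surjective f) (i : Fin m) (hi : 0 < n i) : k < n i * n i := by
  have : Nonempty (Fin (n i)) := ⟨⟨0, hi⟩⟩
  simpa [Module.finrank_matrix] using hS.lt_finrank_of_surjective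
    ((Pi.evalAlgHom F _ i).toNonUnitalAlgHom.comp f) ((Function.surjective_eval i).comp hf)

theorem derived_is_perfect_general
    (F : Type u) [Field F]
    (A : Type v) [NonUnitalRing A] [Module F A] [SMulCommClass F A A] [IsScalarTower F A A]
    (S : NonUnitalSubalgebra F A)
    (hS_ss : IsMatrixSemisimple F S)
    -- `A` is generated by `S` as a two-sided ideal:
    (hgen : ∀ J : Submodule F A, (∀ a : A, ∀ x ∈ J, a * x ∈ J ∧ x * a ∈ J) →
      (S : Set A) ⊆ J → J = ⊤)
    -- `S` is 1-perfect with `p ≠ 2`, or 4-perfect with `p = 2`: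
    (hperf : (ringChar F ≠ 2 ∧ kPerfect F S 1) ∨ (ringChar F = 2 ∧ kPerfect F S 4)) :
    Submodule.span F
        {z : A | ∃ x ∈ derivedSub F A, ∃ y ∈ derivedSub F A, z = x * y - y * x}
      = derivedSub F A := by
  obtain ⟨m, n, hn, f, hf⟩ := hS_ss
  have hblocks (i : Fin m) :
      2 < Fintype.card (Fin (n i)) ∨ 1 < Fintype.card (Fin (n i)) ∧ (2 : F) ≠ 0 := by
    rw [Fintype.card_fin]
    rcases hperf with ⟨hchar, hk⟩ | ⟨-, hk⟩
    · exact Or.inr ⟨by nlinarith [hk.lt_mul_self f hf.2 i (hn i)], Ring.two_ne_zero hchar⟩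
    · exact Or.inl (by nlinarith [hk.lt_mul_self f hf.2 i (hn i)])
  let fEquiv := Equiv.ofBijective f hf
  let φ := (NonUnitalSubalgebraClass.subtype S).comp
    (f.inverse fEquiv.symm fEquiv.left_inv fEquiv.right_inv)
  have hunit (s : A) (hs : s ∈ S) : φ 1 * s = s := by
    have h : φ (f ⟨s, hs⟩) = s := congrArg Subtype.val (fEquiv.left_inv _)
    rw [← h, ← map_mul, one_mul]
  have hL := map_one_mem_rightColon_of_pi φ hblocks
  have hZ : φ 1 ∈ centerModSecondDerived F A := by
    simpa only [← map_mul, one_mul] using mem_rightColon.mp hL (φ 1)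
  have hcore : twoSidedCore (centerModSecondDerived F A) = ⊤ :=
    hgen _ (mul_mem_twoSidedCore _) fun s hs =>
      mem_twoSidedCore_of_mul_eq_self (fun _ hx _ hy => mul_mem_centerModSecondDerived hx hy) hL
        (mul_mem_centerModSecondDerived_of_mem_rightColon hZ hL) (hunit s hs)
  exact secondDerivedSub_eq_derivedSub (eq_top_mono (twoSidedCore_le _) hcore)

theorem derived_is_perfect
    (F : Type u) [Field F] [IsAlgClosed F]
    (A : Type v) [NonUnitalRing A] [Module F A] [SMulCommClass F A A] [IsScalarTower F A A]
    (S : NonUnitalSubalgebra F A)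
    (hS_ne : S ≠ ⊥)
    (hS_ss : IsMatrixSemisimple F S)
    -- `A` is generated by `S` as a two-sided ideal:
    (hgen : ∀ J : Submodule F A, (∀ a : A, ∀ x ∈ J, a * x ∈ J ∧ x * a ∈ J) →
      (S : Set A) ⊆ J → J = ⊤)
    -- `S` is 1-perfect with `p ≠ 2`, or 4-perfect with `p = 2`:
    (hperf : (ringChar F ≠ 2 ∧ kPerfect F S 1) ∨ (ringChar F = 2 ∧ kPerfect F S 4)) :
    Submodule.span F
        {z : A | ∃ x ∈ derivedSub F A, ∃ y ∈ derivedSub F A, z = x * y - y * x}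
      = derivedSub F A :=
  derived_is_perfect_general F A S hS_ss hgen hperf
end

section
/- Let A be an associative F-algebra containing a non-zero finite-dimensional semisimple subalgebra S. Suppose that A is generated by S as a two-sided ideal (i.e. the smallest two-sided ideal of A containing S equals A), and that S is 1-perfect if p ≠ 2, or 4-perfect if p = 2. Then A^(1) is generated by S^(1) = [S, S] as a Lie ideal: the smallest Lie ideal of the Lie algebra A^(1) containing the span of all commutators [s, t] with s, t ∈ S equals A^(1). -/
/-!
Let `J` be a Lie ideal of `A⁽¹⁾` containing `[S, S]` and let `K = {w | [w, A] ⊆ J}`; it suffices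
to show `K = A`. The identity `[ac, b] = [a, cb] + [c, ba]` makes `K` closed under
multiplication, and Jacobi gives `[[j₁, j₂], A] ⊆ J` for `j₁, j₂ ∈ J`. Brackets of matrix units
of `S` put each off-diagonal `e_kl` and each `e_kk - e_ll` in `J`, so `[e_kk - e_ll, e_kl] = 2 e_kl`
(characteristic `≠ 2`) or `[e_kw, e_wl] = e_kl` with a third index `w` (characteristic `2`) puts
every matrix unit in `K`; perfectness of `S` is exactly what forces the matrix blocks to be large
enough for this. Two polynomial identities then give `x e_kl, e_kl x ∈ K` for all `x`, so the
largest two-sided ideal of `A` inside `K` contains `S` and is therefore all of `A`.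
-/

universe u v

section IdealCore

variable {R A : Type*} [Ring R] [NonUnitalRing A] [Module R A] [SMulCommClass R A A]
  [IsScalarTower R A A]

/-- The largest two-sided ideal contained in `K`. -/
def idealCore (K : Submodule R A) : Submodule R A where
  carrier := {x | x ∈ K ∧ ∀ a c : A, a * x ∈ K ∧ x * c ∈ K ∧ a * x * c ∈ K}
  zero_mem' := by simp
  add_mem' {x y} hx hy := by
    refine ⟨add_mem hx.1 hy.1, fun a c => ?_⟩
    obtain ⟨hx₁, hx₂, hx₃⟩ := hx.2 a c
    obtain ⟨hy₁, hy₂, hy₃⟩ := hy.2 a c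
    simp only [mul_add, add_mul]
    exact ⟨add_mem hx₁ hy₁, add_mem hx₂ hy₂, add_mem hx₃ hy₃⟩
  smul_mem' r x hx := by
    refine ⟨K.smul_mem r hx.1, fun a c => ?_⟩
    obtain ⟨h₁, h₂, h₃⟩ := hx.2 a c
    simp only [mul_smul_comm, smul_mul_assoc]
    exact ⟨K.smul_mem r h₁, K.smul_mem r h₂, K.smul_mem r h₃⟩

variable {K : Submodule R A}

theorem idealCore_le : idealCore K ≤ K := fun _ hx => hx.1

theorem mul_mem_idealCore {x : A} (hx : x ∈ idealCore K) (a : A) :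
    a * x ∈ idealCore K ∧ x * a ∈ idealCore K := by
  refine ⟨⟨(hx.2 a a).1, fun b c => ?_⟩, ⟨(hx.2 a a).2.1, fun b c => ?_⟩⟩
  · simp only [← mul_assoc]
    exact ⟨(hx.2 _ c).1, (hx.2 a c).2.2, (hx.2 _ c).2.2⟩
  · simp only [mul_assoc]
    exact ⟨by simpa only [mul_assoc] using (hx.2 b a).2.2, (hx.2 b _).2.1,
      by simpa only [mul_assoc] using (hx.2 b _).2.2⟩

end IdealCore

section CentralizerModulo

variable {R A : Type*} [Ring R] [NonUnitalRing A] [Module R A] [SMulCommClass R A A]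
  [IsScalarTower R A A]

def centralizerModulo (J : Submodule R A) : Submodule R A where
  carrier := {w | ∀ b, ⁅w, b⁆ ∈ J}
  zero_mem' b := by simp [Ring.lie_def]
  add_mem' {x y} hx hy b := by
    have h : ⁅x + y, b⁆ = ⁅x, b⁆ + ⁅y, b⁆ := by simp only [Ring.lie_def]; noncomm_ring
    exact h ▸ add_mem (hx b) (hy b)
  smul_mem' c x hx b := by
    have h : ⁅c • x, b⁆ = c • ⁅x, b⁆ := by
      simp only [Ring.lie_def, smul_sub, smul_mul_assoc, mul_smul_comm]
    exact h ▸ J.smul_mem c (hx b)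

variable {J : Submodule R A}

theorem mul_mem_centralizerModulo {a c : A} (ha : a ∈ centralizerModulo J)
    (hc : c ∈ centralizerModulo J) : a * c ∈ centralizerModulo J := fun b => by
  have h : ⁅a * c, b⁆ = ⁅a, c * b⁆ + ⁅c, b * a⁆ := by simp only [Ring.lie_def]; noncomm_ring
  exact h ▸ add_mem (ha _) (hc _)

theorem lie_mem_centralizerModulo (hJ : ∀ p q : A, ∀ y ∈ J, ⁅⁅p, q⁆, y⁆ ∈ J) {j₁ j₂ : A}
    (h₁ : j₁ ∈ J) (h₂ : j₂ ∈ J) : ⁅j₁, j₂⁆ ∈ centralizerModulo J := fun a => by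
  have h : ⁅⁅j₁, j₂⁆, a⁆ = ⁅⁅j₁, a⁆, j₂⁆ - ⁅⁅j₂, a⁆, j₁⁆ := by
    simp only [Ring.lie_def]; noncomm_ring
  exact h ▸ sub_mem (hJ _ _ _ h₂) (hJ _ _ _ h₁)

theorem mul_mem_centralizerModulo_left (hJ : ∀ p q : A, ∀ y ∈ J, ⁅⁅p, q⁆, y⁆ ∈ J) {u g : A}
    (hug : u * g = 0) (hgu : g * u = u) (hgg : g * g = g)
    (hu : u ∈ centralizerModulo J) (hg : g ∈ centralizerModulo J) (x : A) :
    x * u ∈ centralizerModulo J := fun b => by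
  have h : ⁅x * u, b⁆ = -⁅g, u * b * x⁆ + ⁅u, b * x⁆ + ⁅g, x * u * b⁆
      - (2 : ℤ) • ⁅g, x * u * b * g⁆ + ⁅g, u * b * g * x⁆ + ⁅⁅g, u * b⁆, ⁅g, x⁆⁆
      - ⁅g, b * g * x * u⁆ - ⁅u, b * g * x⁆ + ⁅⁅g, b⁆, ⁅g, x * u⁆⁆ := by
    simp only [Ring.lie_def, two_zsmul, mul_sub, sub_mul, mul_assoc]
    simp only [← mul_assoc u g, ← mul_assoc g u, ← mul_assoc g g, hug, hgu, hgg, zero_mul]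
    noncomm_ring
  rw [h]
  apply_rules [add_mem, sub_mem, neg_mem, zsmul_mem]

theorem mul_mem_centralizerModulo_right (hJ : ∀ p q : A, ∀ y ∈ J, ⁅⁅p, q⁆, y⁆ ∈ J) {u g : A}
    (hug : u * g = 0) (hgu : g * u = u) (hgg : g * g = g)
    (hu : u ∈ centralizerModulo J) (hg : g ∈ centralizerModulo J) (x : A) :
    u * x ∈ centralizerModulo J := fun b => by
  have h : ⁅u * x, b⁆ = ⁅g, u * x * b⁆ - ⁅g, b * u * x⁆ + (2 : ℤ) • ⁅g, b * u * x * g⁆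
      - ⁅g, u * x * g * b⁆ + ⁅g, x * g * b * u⁆ + ⁅u, x * g * b⁆ + ⁅⁅g, b * u⁆, ⁅g, x⁆⁆
      + ⁅⁅g, b⁆, ⁅g, u * x⁆⁆ := by
    simp only [Ring.lie_def, two_zsmul, mul_sub, sub_mul, mul_assoc]
    simp only [← mul_assoc u g, ← mul_assoc g u, ← mul_assoc g g, hug, hgu, hgg, zero_mul]
    noncomm_ring
  rw [h]
  apply_rules [add_mem, sub_mem, neg_mem, zsmul_mem]

end CentralizerModulo

structure IsMatrixUnits {ι A : Type*} [NonUnitalRing A] (e : ι → ι → A) : Prop where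
  mul_same : ∀ k l m, e k l * e l m = e k m
  mul_of_ne : ∀ {k l l' m}, l ≠ l' → e k l * e l' m = 0

namespace IsMatrixUnits

variable {R A ι : Type*} [Ring R] [NonUnitalRing A] [Module R A] [SMulCommClass R A A]
  [IsScalarTower R A A] {J : Submodule R A} {e : ι → ι → A}

theorem lie_diag_offDiag (he : IsMatrixUnits e) {k l : ι} (hkl : k ≠ l) :
    ⁅e k k, e k l⁆ = e k l := by
  rw [Ring.lie_def, he.mul_same, he.mul_of_ne hkl.symm, sub_zero]

theorem lie_offDiag_offDiag (he : IsMatrixUnits e) (k l : ι) :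
    ⁅e k l, e l k⁆ = e k k - e l l := by
  rw [Ring.lie_def, he.mul_same, he.mul_same]

theorem offDiag_mem_centralizerModulo [Fintype ι] (he : IsMatrixUnits e)
    (hJ : ∀ p q : A, ∀ y ∈ J, ⁅⁅p, q⁆, y⁆ ∈ J) (hS : ∀ k l k' l', ⁅e k l, e k' l'⁆ ∈ J)
    (hι : IsUnit (2 : R) ∨ 3 ≤ Fintype.card ι) {k l : ι} (hkl : k ≠ l) :
    e k l ∈ centralizerModulo J := by
  classical
  have hoff : ∀ {k l}, k ≠ l → e k l ∈ J := fun hkl => he.lie_diag_offDiag hkl ▸ hS _ _ _ _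
  rcases hι with h2 | h3
  · have h : ⁅e k k - e l l, e k l⁆ = (2 : R) • e k l := by
      rw [two_smul, Ring.lie_def, sub_mul, mul_sub, he.mul_same, he.mul_of_ne hkl.symm,
        he.mul_of_ne hkl.symm, he.mul_same]
      abel
    have hmem := lie_mem_centralizerModulo hJ (he.lie_offDiag_offDiag k l ▸ hS _ _ _ _)
      (hoff hkl)
    rwa [h, Submodule.smul_mem_iff_of_isUnit _ h2] at hmem
  · obtain ⟨w, hwk, hwl⟩ : ∃ w, w ≠ k ∧ w ≠ l := by
      obtain ⟨w, hw⟩ := Finset.exists_mem_notMem_of_card_lt_card (s := {k, l})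
        (t := Finset.univ) (by grind [Finset.card_le_two, Finset.card_univ])
      exact ⟨w, by simpa using hw⟩
    have h : ⁅e k w, e w l⁆ = e k l := by
      rw [Ring.lie_def, he.mul_same, he.mul_of_ne hkl.symm, sub_zero]
    exact h ▸ lie_mem_centralizerModulo hJ (hoff hwk.symm) (hoff hwl)

theorem mem_centralizerModulo [Fintype ι] [Nontrivial ι] (he : IsMatrixUnits e)
    (hJ : ∀ p q : A, ∀ y ∈ J, ⁅⁅p, q⁆, y⁆ ∈ J) (hS : ∀ k l k' l', ⁅e k l, e k' l'⁆ ∈ J)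
    (hι : IsUnit (2 : R) ∨ 3 ≤ Fintype.card ι) (k l : ι) : e k l ∈ centralizerModulo J := by
  rcases eq_or_ne k l with rfl | hkl
  · obtain ⟨l, hlk⟩ := exists_ne k
    exact he.mul_same k l k ▸ mul_mem_centralizerModulo
      (he.offDiag_mem_centralizerModulo hJ hS hι hlk.symm)
      (he.offDiag_mem_centralizerModulo hJ hS hι hlk)
  · exact he.offDiag_mem_centralizerModulo hJ hS hι hkl

theorem mul_mem_centralizerModulo_left [Nontrivial ι] (he : IsMatrixUnits e)
    (hJ : ∀ p q : A, ∀ y ∈ J, ⁅⁅p, q⁆, y⁆ ∈ J) (hK : ∀ k l, e k l ∈ centralizerModulo J)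
    (x : A) (k l : ι) : x * e k l ∈ centralizerModulo J := by
  have hoff : ∀ {k l}, k ≠ l → x * e k l ∈ centralizerModulo J := fun {k l} hkl =>
    _root_.mul_mem_centralizerModulo_left hJ (he.mul_of_ne hkl.symm) (he.mul_same k k l)
      (he.mul_same k k k) (hK k l) (hK k k) x
  rcases eq_or_ne k l with rfl | hkl
  · obtain ⟨l, hlk⟩ := exists_ne k
    rw [← he.mul_same k l k, ← mul_assoc]
    exact mul_mem_centralizerModulo (hoff hlk.symm) (hK l k)
  · exact hoff hkl

theorem mul_mem_centralizerModulo_right [Nontrivial ι] (he : IsMatrixUnits e)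
    (hJ : ∀ p q : A, ∀ y ∈ J, ⁅⁅p, q⁆, y⁆ ∈ J) (hK : ∀ k l, e k l ∈ centralizerModulo J)
    (x : A) (k l : ι) : e k l * x ∈ centralizerModulo J := by
  have hoff : ∀ {k l}, k ≠ l → e k l * x ∈ centralizerModulo J := fun {k l} hkl =>
    _root_.mul_mem_centralizerModulo_right hJ (he.mul_of_ne hkl.symm) (he.mul_same k k l)
      (he.mul_same k k k) (hK k l) (hK k k) x
  rcases eq_or_ne k l with rfl | hkl
  · obtain ⟨l, hlk⟩ := exists_ne k
    rw [← he.mul_same k l k, mul_assoc]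
    exact mul_mem_centralizerModulo (hK k l) (hoff hlk)
  · exact hoff hkl

theorem mem_idealCore [Nontrivial ι] (he : IsMatrixUnits e)
    (hJ : ∀ p q : A, ∀ y ∈ J, ⁅⁅p, q⁆, y⁆ ∈ J) (hK : ∀ k l, e k l ∈ centralizerModulo J)
    (k l : ι) : e k l ∈ idealCore (centralizerModulo J) := by
  refine ⟨hK k l, fun a c => ⟨he.mul_mem_centralizerModulo_left hJ hK a k l,
    he.mul_mem_centralizerModulo_right hJ hK c k l, ?_⟩⟩
  rw [← he.mul_same k l l, ← mul_assoc, mul_assoc]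
  exact mul_mem_centralizerModulo (he.mul_mem_centralizerModulo_left hJ hK a k l)
    (he.mul_mem_centralizerModulo_right hJ hK c l l)

end IsMatrixUnits

section MatrixBlocks

variable {R ι A : Type*} [Ring R] [DecidableEq ι] {n : ι → Type*}
  [∀ i, Fintype (n i)] [∀ i, DecidableEq (n i)] [NonUnitalRing A] [Module R A]

theorem isMatrixUnits_single (φ : (∀ i, Matrix (n i) (n i) R) →ₙₐ[R] A) (i : ι) :
    IsMatrixUnits fun k l => φ (Pi.single i (Matrix.single k l 1)) where
  mul_same k l m := by
    rw [← map_mul, ← Pi.single_mul, Matrix.single_mul_single_same, one_mul]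
  mul_of_ne hl := by
    rw [← map_mul, ← Pi.single_mul, Matrix.single_mul_single_of_ne (h := hl), Pi.single_zero,
      map_zero]

theorem map_mem_of_forall_single_mem [Fintype ι] (φ : (∀ i, Matrix (n i) (n i) R) →ₗ[R] A)
    {P : Submodule R A} (h : ∀ i k l, φ (Pi.single i (Matrix.single k l 1)) ∈ P)
    (y : ∀ i, Matrix (n i) (n i) R) : φ y ∈ P := by
  have hle : Submodule.map φ ⊤ ≤ P := by
    rw [← (Pi.basis fun i => Matrix.stdBasis R (n i) (n i)).span_eq, Submodule.map_span_le]
    rintro _ ⟨⟨i, k, l⟩, rfl⟩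
    simpa [Matrix.stdBasis_eq_single] using h i k l
  exact hle ⟨y, trivial, rfl⟩

end MatrixBlocks

theorem kPerfect.lt_rank_of_surjective {F S ι : Type*} [Field F] [NonUnitalRing S] [Module F S]
    {B : ι → Type*} [∀ i, NonUnitalRing (B i)] [∀ i, Module F (B i)] {k : ℕ}
    (h : kPerfect F S k) (f : S →ₙₐ[F] ∀ i, B i) (hf : Function.Surjective f) (i : ι)
    [Nontrivial (B i)] : (k : Cardinal) < Module.rank F (B i) := by
  let π : S →ₗ[F] B i := LinearMap.proj i ∘ₗ (f : S →ₗ[F] ∀ i, B i)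
  have hπ : Function.Surjective π := (Function.surjective_eval i).comp hf
  by_contra! hle
  refine h (LinearMap.ker π) (fun a x hx => ?_) ?_ ?_
  · simp_all [π, LinearMap.mem_ker, map_mul]
  · intro htop
    obtain ⟨b, hb⟩ := exists_ne (0 : B i)
    obtain ⟨s, rfl⟩ := hπ b
    exact hb (LinearMap.mem_ker.mp (htop ▸ Submodule.mem_top))
  · exact Cardinal.lift_le_nat_iff.mp
      ((π.quotKerEquivOfSurjective hπ).lift_rank_eq.le.trans (Cardinal.lift_le_nat_iff.mpr hle))

theorem kPerfect.lt_mul_self_of_surjective {F S ι : Type*} [Field F] [NonUnitalRing S]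
    [Module F S] {n : ι → ℕ} {k : ℕ} (h : kPerfect F S k)
    (f : S →ₙₐ[F] ∀ i, Matrix (Fin (n i)) (Fin (n i)) F) (hf : Function.Surjective f) (i : ι)
    (hn : 0 < n i) : k < n i * n i := by
  have : NeZero (n i) := ⟨hn.ne'⟩
  have hk := h.lt_rank_of_surjective f hf i
  rw [rank_matrix, Cardinal.mk_fin, Cardinal.lift_natCast, ← Nat.cast_mul] at hk
  exact_mod_cast hk

theorem derived_generated_by_derived_of_S_general
    (F : Type u) [Field F]
    (A : Type v) [NonUnitalRing A] [Module F A] [SMulCommClass F A A] [IsScalarTower F A A]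
    (S : NonUnitalSubalgebra F A)
    (hS_ss : IsMatrixSemisimple F S)
    -- `A` is generated by `S` as a two-sided ideal:
    (hgen : ∀ J : Submodule F A, (∀ a : A, ∀ x ∈ J, a * x ∈ J ∧ x * a ∈ J) →
      (S : Set A) ⊆ J → J = ⊤)
    -- `S` is 1-perfect with `p ≠ 2`, or 4-perfect with `p = 2`:
    (hperf : (ringChar F ≠ 2 ∧ kPerfect F S 1) ∨ (ringChar F = 2 ∧ kPerfect F S 4)) :
    -- every Lie ideal of `A⁽¹⁾` containing all commutators `[s, t]`, `s, t ∈ S`,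
    -- is all of `A⁽¹⁾`; i.e. `A⁽¹⁾` is generated by `S⁽¹⁾` as a Lie ideal:
    ∀ J : Submodule F A, J ≤ derivedSub F A →
      (∀ x ∈ derivedSub F A, ∀ y ∈ J, x * y - y * x ∈ J) →
      (∀ s ∈ S, ∀ t ∈ S, s * t - t * s ∈ J) →
      J = derivedSub F A := by
  intro J hJle hLie hSS
  obtain ⟨m, n, hn, f, hf⟩ := hS_ss
  let f' := Equiv.ofBijective f hf
  let φ : (∀ i, Matrix (Fin (n i)) (Fin (n i)) F) →ₙₐ[F] A :=
    (NonUnitalSubalgebraClass.subtype S).comp (f.inverse f'.symm f'.left_inv f'.right_inv)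
  have hJ : ∀ p q : A, ∀ y ∈ J, ⁅⁅p, q⁆, y⁆ ∈ J := fun p q =>
    hLie _ (Submodule.subset_span ⟨p, q, rfl⟩)
  have hsize : ∀ i, 2 ≤ n i ∧ (IsUnit (2 : F) ∨ 3 ≤ n i) := fun i => by
    rcases hperf with ⟨hchar, hk⟩ | ⟨-, hk⟩
    · have := hk.lt_mul_self_of_surjective f hf.2 i (hn i)
      exact ⟨by nlinarith, .inl (Ring.two_ne_zero hchar).isUnit⟩
    · have := hk.lt_mul_self_of_surjective f hf.2 i (hn i)
      exact ⟨by nlinarith, .inr (by nlinarith)⟩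
  have hcore : ∀ i k l,
      φ (Pi.single i (Matrix.single k l 1)) ∈ idealCore (centralizerModulo J) := by
    intro i
    have : Nontrivial (Fin (n i)) := Fin.nontrivial_iff_two_le.mpr (hsize i).1
    have he := isMatrixUnits_single φ i
    have hS : ∀ k l k' l', ⁅φ (Pi.single i (Matrix.single k l 1)),
        φ (Pi.single i (Matrix.single k' l' 1))⁆ ∈ J := fun _ _ _ _ =>
      hSS _ (SetLike.coe_mem _) _ (SetLike.coe_mem _)
    exact he.mem_idealCore hJ (he.mem_centralizerModulo hJ hS (by simpa using (hsize i).2))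
  have htop : idealCore (centralizerModulo J) = ⊤ :=
    hgen _ (fun a x hx => mul_mem_idealCore hx a) fun s hs => by
      have hφ : φ (f ⟨s, hs⟩) = s := congrArg Subtype.val (f'.symm_apply_apply ⟨s, hs⟩)
      exact hφ ▸ map_mem_of_forall_single_mem (φ : _ →ₗ[F] A) hcore (f ⟨s, hs⟩)
  refine le_antisymm hJle (Submodule.span_le.mpr ?_)
  rintro _ ⟨p, q, rfl⟩
  exact idealCore_le (htop ▸ Submodule.mem_top : p ∈ idealCore (centralizerModulo J)) q

theorem derived_generated_by_derived_of_S
    (F : Type u) [Field F] [IsAlgClosed F]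
    (A : Type v) [NonUnitalRing A] [Module F A] [SMulCommClass F A A] [IsScalarTower F A A]
    (S : NonUnitalSubalgebra F A)
    (hS_ne : S ≠ ⊥)
    (hS_ss : IsMatrixSemisimple F S)
    -- `A` is generated by `S` as a two-sided ideal:
    (hgen : ∀ J : Submodule F A, (∀ a : A, ∀ x ∈ J, a * x ∈ J ∧ x * a ∈ J) →
      (S : Set A) ⊆ J → J = ⊤)
    -- `S` is 1-perfect with `p ≠ 2`, or 4-perfect with `p = 2`:
    (hperf : (ringChar F ≠ 2 ∧ kPerfect F S 1) ∨ (ringChar F = 2 ∧ kPerfect F S 4)) :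
    -- every Lie ideal of `A⁽¹⁾` containing all commutators `[s, t]`, `s, t ∈ S`,
    -- is all of `A⁽¹⁾`; i.e. `A⁽¹⁾` is generated by `S⁽¹⁾` as a Lie ideal:
    ∀ J : Submodule F A, J ≤ derivedSub F A →
      (∀ x ∈ derivedSub F A, ∀ y ∈ J, x * y - y * x ∈ J) →
      (∀ s ∈ S, ∀ t ∈ S, s * t - t * s ∈ J) →
      J = derivedSub F A :=
  derived_generated_by_derived_of_S_general F A S hS_ss hgen hperf
end

section
/- Let A be an associative F-algebra containing a non-zero finite-dimensional semisimple subalgebra S with simple components S_i ≅ M_{n_i}(F), i ∈ I. Set Î = I ∪ {0}, n_0 = 1, and for i, j ∈ Î let V_ij be the space of n_i × n_j matrices over F. Then there exist F-vector spaces Λ(i,j) for i, j ∈ Î, an associative F-algebra structure on Λ = ⊕_{i,j∈Î} Λ(i,j) satisfying Λ(i,j)Λ(s,t) = 0 for j ≠ s and Λ(i,j)Λ(j,t) ⊆ Λ(i,t), with Λ(i,i) having an identity element 1_i for each i ∈ I, and an isomorphism of associative algebras θ : A → ⊕_{i,j∈Î} V_ij ⊗ Λ(i,j), where the target carries the product (X⊗λ)(Y⊗μ)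 = XY ⊗ λμ (XY the matrix product, equal to 0 when the inner sizes do not match), such that θ(S_i) = V_ii ⊗ 1_i for every i ∈ I. -/
/-!
The copy `S ≅ ⊕ᵢ M_{nᵢ}(F)` of the matrix algebras in `A` provides matrix units `eⁱ_{ab}` in the
unitization `A⁺`; adjoining the idempotent `1 - Σ eⁱ_{aa}` as a block of size one (the index `0`)
makes them a complete system. With `Λ(i,j) = eⁱ_{11} A eʲ_{11}`, every `x ∈ A` is uniquely
`Σ eⁱ_{a1} (eⁱ_{1a} x eʲ_{b1}) eʲ_{1b}`, and the relations `eⁱ_{ab} eʲ_{cd} = δ_{ij} δ_{bc} eⁱ_{ad}`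
turn the product of `A` into matrix multiplication tensored with the product of `Λ`.
-/

open scoped TensorProduct DirectSum

universe u v

/-- `n` extended to `Î = I ∪ {0}` (`none` playing the role of `0`), with `n_0 = 1`. -/
abbrev nopt {I : Type} (n : I → ℕ) : Option I → ℕ
  | none => 1
  | some i => n i

/-- A decomposition of the algebra `A` as `⊕_{i,j ∈ Î} V_ij ⊗ Λ(i,j)` adapted to the
semisimple subalgebra `S` whose components are identified with matrix algebras by `f`. -/
structure MatrixAlgDecomp (F : Type u) [Field F]
    (A : Type v) [NonUnitalRing A] [Module F A] [SMulCommClass F A A] [IsScalarTower F A A]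
    (S : NonUnitalSubalgebra F A)
    (I : Type) [Fintype I] [DecidableEq I] (n : I → ℕ)
    (f : S →ₙₐ[F] ∀ i, Matrix (Fin (n i)) (Fin (n i)) F) :
    Type (max u (v + 1)) where
  /-- the multiplicity spaces `Λ(i,j)` -/
  Lam : Option I → Option I → Type v
  [acg : ∀ i j, AddCommGroup (Lam i j)]
  [mod : ∀ i j, Module F (Lam i j)]
  /-- the products `Λ(i,j) × Λ(j,t) → Λ(i,t)` (all other products being zero) -/
  mu : ∀ i j k, Lam i j →ₗ[F] Lam j k →ₗ[F] Lam i k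
  /-- associativity of the product of `Λ` -/
  assoc : ∀ (i j k l : Option I) (a : Lam i j) (b : Lam j k) (c : Lam k l),
    mu i k l (mu i j k a b) c = mu i j l a (mu j k l b c)
  /-- the identity elements `1_i` of the subalgebras `Λ(i,i)`, `i ∈ I` -/
  one : ∀ i : I, Lam (some i) (some i)
  one_mul : ∀ (i : I) (a : Lam (some i) (some i)), mu _ _ _ (one i) a = a
  mul_one : ∀ (i : I) (a : Lam (some i) (some i)), mu _ _ _ a (one i) = a
  /-- the `F`-linear isomorphism `θ : A ≅ ⊕_{i,j} V_ij ⊗ Λ(i,j)` -/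
  θ : A ≃ₗ[F] ⨁ p : Option I × Option I,
        Matrix (Fin (nopt n p.1)) (Fin (nopt n p.2)) F ⊗[F] Lam p.1 p.2
  /-- `θ` is multiplicative: `(X ⊗ λ)(Y ⊗ μ) = XY ⊗ λμ` for matching inner indices -/
  map_mul : ∀ (i j k : Option I) (X : Matrix (Fin (nopt n i)) (Fin (nopt n j)) F)
      (a : Lam i j) (Y : Matrix (Fin (nopt n j)) (Fin (nopt n k)) F) (b : Lam j k),
      θ.symm (DirectSum.lof F (Option I × Option I)
          (fun q => Matrix (Fin (nopt n q.1)) (Fin (nopt n q.2)) F ⊗[F] Lam q.1 q.2)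
          (i, j) (X ⊗ₜ a)) *
        θ.symm (DirectSum.lof F (Option I × Option I)
          (fun q => Matrix (Fin (nopt n q.1)) (Fin (nopt n q.2)) F ⊗[F] Lam q.1 q.2)
          (j, k) (Y ⊗ₜ b))
      = θ.symm (DirectSum.lof F (Option I × Option I)
          (fun q => Matrix (Fin (nopt n q.1)) (Fin (nopt n q.2)) F ⊗[F] Lam q.1 q.2)
          (i, k) ((X * Y) ⊗ₜ mu i j k a b))
  /-- `θ` is multiplicative: `(X ⊗ λ)(Y ⊗ μ) = 0` when the inner indices differ -/
  map_mul_zero : ∀ (i j s t : Option I), j ≠ s →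
      ∀ (X : Matrix (Fin (nopt n i)) (Fin (nopt n j)) F) (a : Lam i j)
        (Y : Matrix (Fin (nopt n s)) (Fin (nopt n t)) F) (b : Lam s t),
      θ.symm (DirectSum.lof F (Option I × Option I)
          (fun q => Matrix (Fin (nopt n q.1)) (Fin (nopt n q.2)) F ⊗[F] Lam q.1 q.2)
          (i, j) (X ⊗ₜ a)) *
        θ.symm (DirectSum.lof F (Option I × Option I)
          (fun q => Matrix (Fin (nopt n q.1)) (Fin (nopt n q.2)) F ⊗[F] Lam q.1 q.2)
          (s, t) (Y ⊗ₜ b)) = 0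
  /-- `θ` maps the simple component `S_i` of `S` onto `V_ii ⊗ 1_i` -/
  comp_image : ∀ i : I,
      (fun a : A => θ a) '' {a : A | ∃ h : a ∈ S, ∀ j : I, j ≠ i → f ⟨a, h⟩ j = 0}
        = {y | ∃ X : Matrix (Fin (n i)) (Fin (n i)) F,
            y = DirectSum.lof F (Option I × Option I)
              (fun q => Matrix (Fin (nopt n q.1)) (Fin (nopt n q.2)) F ⊗[F] Lam q.1 q.2)
              (some i, some i) (X ⊗ₜ one i)}

structure MatrixUnits (R : Type*) [NonUnitalSemiring R] {ι : Type*} (m : ι → ℕ) where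
  unit : ∀ i, Fin (m i) → Fin (m i) → R
  unit_mul_unit : ∀ i a b c, unit i a b * unit i b c = unit i a c
  unit_mul_unit_of_ne_block : ∀ {i j}, i ≠ j → ∀ a b c d, unit i a b * unit j c d = 0
  unit_mul_unit_of_ne : ∀ i {b c}, b ≠ c → ∀ a d, unit i a b * unit i c d = 0

namespace MatrixUnits

section NonUnital

variable {R R' : Type*} [NonUnitalSemiring R] [NonUnitalSemiring R'] {ι : Type*} {m : ι → ℕ}

def map (e : MatrixUnits R m) (φ : R →ₙ+* R') : MatrixUnits R' m where
  unit i a b := φ (e.unit i a b)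
  unit_mul_unit i a b c := by rw [← map_mul, e.unit_mul_unit]
  unit_mul_unit_of_ne_block h a b c d := by
    rw [← map_mul, e.unit_mul_unit_of_ne_block h, map_zero]
  unit_mul_unit_of_ne i _ _ h a d := by rw [← map_mul, e.unit_mul_unit_of_ne i h, map_zero]

variable [Fintype ι] (e : MatrixUnits R m)

def diagSum : R := ∑ i, ∑ a, e.unit i a a

theorem unit_mul_diagSum (i : ι) (a b : Fin (m i)) : e.unit i a b * e.diagSum = e.unit i a b := by
  classical
  rw [diagSum, Finset.mul_sum, Finset.sum_eq_single i, Finset.mul_sum, Finset.sum_eq_single b,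
    e.unit_mul_unit]
  · exact fun c _ hc => e.unit_mul_unit_of_ne i (Ne.symm hc) a c
  · simp
  · intro j _ hj
    rw [Finset.mul_sum]
    exact Finset.sum_eq_zero fun c _ => e.unit_mul_unit_of_ne_block hj.symm ..
  · simp

theorem diagSum_mul_unit (i : ι) (a b : Fin (m i)) : e.diagSum * e.unit i a b = e.unit i a b := by
  classical
  rw [diagSum, Finset.sum_mul, Finset.sum_eq_single i, Finset.sum_mul, Finset.sum_eq_single a,
    e.unit_mul_unit]
  · exact fun c _ hc => e.unit_mul_unit_of_ne i hc c b
  · simp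
  · intro j _ hj
    rw [Finset.sum_mul]
    exact Finset.sum_eq_zero fun c _ => e.unit_mul_unit_of_ne_block hj ..
  · simp

theorem isIdempotentElem_diagSum : IsIdempotentElem e.diagSum := by
  rw [IsIdempotentElem]
  nth_rw 2 [diagSum]
  simp only [Finset.mul_sum, diagSum_mul_unit]
  rfl

end NonUnital

def std (F : Type*) [Semiring F] {ι : Type*} [DecidableEq ι] (n : ι → ℕ) :
    MatrixUnits (∀ i, Matrix (Fin (n i)) (Fin (n i)) F) n where
  unit i a b := Pi.single i (Matrix.single a b 1)
  unit_mul_unit i a b c := by rw [← Pi.single_mul, Matrix.single_mul_single_same, mul_one]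
  unit_mul_unit_of_ne_block {i j} h a b c d := by
    ext k : 1
    by_cases hk : k = j
    · subst hk
      simp [Pi.single_eq_of_ne' h]
    · simp [Pi.single_eq_of_ne hk]
  unit_mul_unit_of_ne i _ _ h a d := by
    rw [← Pi.single_mul, Matrix.single_mul_single_of_ne (h := h), Pi.single_zero]

theorem sum_smul_std_unit (F : Type*) [Semiring F] {ι : Type*} [DecidableEq ι] {n : ι → ℕ}
    (i : ι) (X : Matrix (Fin (n i)) (Fin (n i)) F) :
    ∑ a, ∑ b, X a b • (std F n).unit i a b = Pi.single i X := by
  ext j : 1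
  rcases eq_or_ne j i with rfl | hj
  · simp only [std, Finset.sum_apply, Pi.smul_apply, Pi.single_eq_same, Matrix.smul_single,
      smul_eq_mul, mul_one]
    exact (Matrix.matrix_eq_sum_single X).symm
  · simp [std, Finset.sum_apply, Pi.single_eq_of_ne hj]

variable {R : Type*} [Ring R] {ι : Type} [Fintype ι] {m : ι → ℕ}

def completion (e : MatrixUnits R m) : MatrixUnits R (nopt m) where
  unit
    | some i => e.unit i
    | none => fun _ _ => 1 - e.diagSum
  unit_mul_unit
    | some i => e.unit_mul_unit i
    | none => fun _ _ _ => e.isIdempotentElem_diagSum.one_sub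
  unit_mul_unit_of_ne_block := by
    rintro (_ | i) (_ | j) h
    · exact absurd rfl h
    · intro _ _ c d
      simp only [sub_mul, one_mul, diagSum_mul_unit, sub_self]
    · intro a b _ _
      simp only [mul_sub, mul_one, unit_mul_diagSum, sub_self]
    · exact e.unit_mul_unit_of_ne_block (Option.some_injective _ |>.ne_iff.mp h)
  unit_mul_unit_of_ne
    | some i => e.unit_mul_unit_of_ne i
    | none => fun h => absurd (Subsingleton.elim _ _) h

theorem diagSum_completion (e : MatrixUnits R m) : e.completion.diagSum = 1 := by
  simp [diagSum, completion, Fintype.sum_option]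

end MatrixUnits

namespace Unitization

variable {F : Type*} [CommRing F] {A : Type*} [NonUnitalRing A] [Module F A]

theorem inr_sum {κ : Type*} (s : Finset κ) (g : κ → A) :
    ((∑ k ∈ s, g k : A) : Unitization F A) = ∑ k ∈ s, (g k : Unitization F A) :=
  map_sum (inrNonUnitalAlgHom F A) g s

variable [SMulCommClass F A A] [IsScalarTower F A A]

-- `A` is an ideal of its unitization, so taking `snd` loses nothing (see `inr_sandwich`).
def sandwich (u v : Unitization F A) : A →ₗ[F] A where
  toFun x := (u * x * v).snd
  map_add' x y := by rw [inr_add, mul_add, add_mul, snd_add]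
  map_smul' c x := by rw [inr_smul, mul_smul_comm, smul_mul_assoc, snd_smul, RingHom.id_apply]

theorem inr_sandwich (u v : Unitization F A) (x : A) :
    (sandwich u v x : Unitization F A) = u * x * v := by
  ext
  · simp [sandwich]
  · rfl

theorem sandwich_sandwich (u v u' v' : Unitization F A) (x : A) :
    sandwich u v (sandwich u' v' x) = sandwich (u * u') (v' * v) x := by
  apply inr_injective (R := F)
  simp only [inr_sandwich, mul_assoc]

theorem sandwich_zero_left (v : Unitization F A) (x : A) : sandwich 0 v x = 0 :=
  inr_injective (R := F) (by rw [inr_sandwich, zero_mul, zero_mul, inr_zero])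

theorem sandwich_zero_right (u : Unitization F A) (x : A) : sandwich u 0 x = 0 :=
  inr_injective (R := F) (by rw [inr_sandwich, mul_zero, inr_zero])

def corner (u v : Unitization F A) : Submodule F A where
  carrier := {x | u * x = x ∧ (x : Unitization F A) * v = x}
  add_mem' := fun ⟨hx, hx'⟩ ⟨hy, hy'⟩ =>
    ⟨by rw [inr_add, mul_add, hx, hy], by rw [inr_add, add_mul, hx', hy']⟩
  zero_mem' := by simp
  smul_mem' _ _ := fun ⟨hx, hx'⟩ =>
    ⟨by rw [inr_smul, mul_smul_comm, hx], by rw [inr_smul, smul_mul_assoc, hx']⟩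

theorem mul_mem_corner {u v u' v' : Unitization F A} {x y : A} (hx : x ∈ corner u v)
    (hy : y ∈ corner u' v') : x * y ∈ corner u v' :=
  ⟨by rw [inr_mul, ← mul_assoc, hx.1], by rw [inr_mul, mul_assoc, hy.2]⟩

theorem sandwich_mem_corner {u v u' v' : Unitization F A} (hu : u * u' = u') (hv : v' * v = v')
    (x : A) : sandwich u' v' x ∈ corner u v :=
  ⟨by rw [inr_sandwich, ← mul_assoc, ← mul_assoc, hu], by rw [inr_sandwich, mul_assoc, hv]⟩

end Unitization

namespace MatrixUnits

open Unitization

variable {F : Type*} [CommRing F] {A : Type*} [NonUnitalRing A] [Module F A]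
  [SMulCommClass F A A] [IsScalarTower F A A] {ι : Type*} {m : ι → ℕ}
  (e : MatrixUnits (Unitization F A) m) (o : ∀ i, Fin (m i))

def peirceSpace (i j : ι) : Submodule F A :=
  corner (e.unit i (o i) (o i)) (e.unit j (o j) (o j))

def place (i j : ι) (a : Fin (m i)) (b : Fin (m j)) : A →ₗ[F] A :=
  sandwich (e.unit i a (o i)) (e.unit j (o j) b)

def extract (i j : ι) (a : Fin (m i)) (b : Fin (m j)) : A →ₗ[F] e.peirceSpace o i j :=
  LinearMap.codRestrict _ (sandwich (e.unit i (o i) a) (e.unit j b (o j)))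
    (sandwich_mem_corner (e.unit_mul_unit ..) (e.unit_mul_unit ..))

theorem coe_extract (i j : ι) (a : Fin (m i)) (b : Fin (m j)) (x : A) :
    (e.extract o i j a b x : A) = sandwich (e.unit i (o i) a) (e.unit j b (o j)) x :=
  rfl

theorem place_extract (i j : ι) (a a' : Fin (m i)) (b b' : Fin (m j)) (x : A) :
    e.place o i j a b (e.extract o i j a' b' x) = sandwich (e.unit i a a') (e.unit j b' b) x := by
  rw [place, coe_extract, sandwich_sandwich, e.unit_mul_unit, e.unit_mul_unit]

theorem coe_extract_place (i j i' j' : ι) (a : Fin (m i)) (b : Fin (m j)) (a' : Fin (m i'))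
    (b' : Fin (m j')) (x : A) :
    (e.extract o i' j' a' b' (e.place o i j a b x) : A) =
      sandwich (e.unit i' (o i') a' * e.unit i a (o i))
        (e.unit j (o j) b * e.unit j' b' (o j')) x :=
  sandwich_sandwich ..

theorem extract_place_self (i j : ι) (a : Fin (m i)) (b : Fin (m j)) (x : e.peirceSpace o i j) :
    e.extract o i j a b (e.place o i j a b x) = x := by
  ext1
  apply inr_injective (R := F)
  rw [coe_extract_place, e.unit_mul_unit, e.unit_mul_unit, inr_sandwich, x.2.1, x.2.2]

theorem extract_place_of_left {i j i' j' : ι} {a : Fin (m i)} {a' : Fin (m i')}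
    (h : e.unit i' (o i') a' * e.unit i a (o i) = 0) (b : Fin (m j)) (b' : Fin (m j')) (x : A) :
    e.extract o i' j' a' b' (e.place o i j a b x) = 0 :=
  Subtype.ext (by rw [coe_extract_place, h, sandwich_zero_left]; rfl)

theorem extract_place_of_right {i j i' j' : ι} {b : Fin (m j)} {b' : Fin (m j')}
    (h : e.unit j (o j) b * e.unit j' b' (o j') = 0) (a : Fin (m i)) (a' : Fin (m i')) (x : A) :
    e.extract o i' j' a' b' (e.place o i j a b x) = 0 :=
  Subtype.ext (by rw [coe_extract_place, h, sandwich_zero_right]; rfl)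

def peirceMul (i j k : ι) :
    e.peirceSpace o i j →ₗ[F] e.peirceSpace o j k →ₗ[F] e.peirceSpace o i k :=
  LinearMap.mk₂ F (fun x y => ⟨x * y, mul_mem_corner x.2 y.2⟩)
    (fun _ _ _ => Subtype.ext (add_mul ..)) (fun _ _ _ => Subtype.ext (smul_mul_assoc ..))
    (fun _ _ _ => Subtype.ext (mul_add ..)) (fun _ _ _ => Subtype.ext (mul_smul_comm ..))

theorem coe_peirceMul (i j k : ι) (x : e.peirceSpace o i j) (y : e.peirceSpace o j k) :
    (e.peirceMul o i j k x y : A) = x * y :=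
  rfl

theorem place_mul_place (i j k : ι) (a : Fin (m i)) (b : Fin (m j)) (d : Fin (m k)) (x : A)
    {y : A} (hy : y ∈ e.peirceSpace o j k) :
    e.place o i j a b x * e.place o j k b d y = e.place o i k a d (x * y) := by
  apply inr_injective (R := F)
  simp only [inr_mul, place, inr_sandwich, mul_assoc]
  rw [← mul_assoc (e.unit j (o j) b), e.unit_mul_unit, ← mul_assoc (e.unit j (o j) (o j)), hy.1]

theorem place_mul_place_eq_zero {i j j' k : ι} {b : Fin (m j)} {c : Fin (m j')}
    (h : e.unit j (o j) b * e.unit j' c (o j') = 0) (a : Fin (m i)) (d : Fin (m k)) (x y : A) :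
    e.place o i j a b x * e.place o j' k c d y = 0 := by
  apply inr_injective (R := F)
  simp only [inr_mul, place, inr_sandwich, mul_assoc]
  rw [← mul_assoc (e.unit j (o j) b), h]
  simp

theorem diag_mem_peirceSpace {i : ι} {x : A}
    (hx : (x : Unitization F A) = e.unit i (o i) (o i)) : x ∈ e.peirceSpace o i i :=
  ⟨by rw [hx, e.unit_mul_unit], by rw [hx, e.unit_mul_unit]⟩

theorem diag_peirceMul {i j : ι} {x : A} (hx : (x : Unitization F A) = e.unit i (o i) (o i))
    (y : e.peirceSpace o i j) : e.peirceMul o i i j ⟨x, e.diag_mem_peirceSpace o hx⟩ y = y :=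
  Subtype.ext <| inr_injective (R := F) <| by rw [coe_peirceMul, inr_mul, hx, y.2.1]

theorem peirceMul_diag {i j : ι} {x : A} (hx : (x : Unitization F A) = e.unit j (o j) (o j))
    (y : e.peirceSpace o i j) : e.peirceMul o i j j y ⟨x, e.diag_mem_peirceSpace o hx⟩ = y :=
  Subtype.ext <| inr_injective (R := F) <| by rw [coe_peirceMul, inr_mul, hx, y.2.2]

variable [DecidableEq ι]

abbrev PeirceSum : Type _ :=
  ⨁ p : ι × ι, Matrix (Fin (m p.1)) (Fin (m p.2)) F ⊗[F] e.peirceSpace o p.1 p.2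

def ofPeirceSum : e.PeirceSum o →ₗ[F] A :=
  DirectSum.toModule F _ A fun p => TensorProduct.lift <| ∑ a, ∑ b,
    (LinearMap.lsmul F A).compl₁₂ (Matrix.entryLinearMap F F a b)
      (e.place o p.1 p.2 a b ∘ₗ (e.peirceSpace o p.1 p.2).subtype)

theorem ofPeirceSum_lof_tmul (p : ι × ι) (X : Matrix (Fin (m p.1)) (Fin (m p.2)) F)
    (x : e.peirceSpace o p.1 p.2) :
    e.ofPeirceSum o (DirectSum.lof F _ _ p (X ⊗ₜ x)) =
      ∑ a, ∑ b, X a b • e.place o p.1 p.2 a b x := by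
  simp [ofPeirceSum]

theorem ofPeirceSum_lof_single_tmul (p : ι × ι) (a : Fin (m p.1)) (b : Fin (m p.2))
    (x : e.peirceSpace o p.1 p.2) :
    e.ofPeirceSum o (DirectSum.lof F _ _ p (Matrix.single a b 1 ⊗ₜ x)) =
      e.place o p.1 p.2 a b x := by
  simp [ofPeirceSum_lof_tmul, Matrix.single_apply, ite_smul, ite_and]

theorem inr_ofPeirceSum_lof_tmul_diag (i : ι) (X : Matrix (Fin (m i)) (Fin (m i)) F) {x : A}
    (hx : (x : Unitization F A) = e.unit i (o i) (o i)) :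
    (e.ofPeirceSum o (DirectSum.lof F _ _ (i, i) (X ⊗ₜ ⟨x, e.diag_mem_peirceSpace o hx⟩)) :
      Unitization F A) = ∑ a, ∑ b, X a b • e.unit i a b := by
  rw [ofPeirceSum_lof_tmul, inr_sum]
  refine Finset.sum_congr rfl fun a _ => ?_
  rw [inr_sum]
  refine Finset.sum_congr rfl fun b _ => ?_
  rw [inr_smul, place, inr_sandwich, hx, e.unit_mul_unit, e.unit_mul_unit]

theorem ofPeirceSum_mul (i j k : ι) (X : Matrix (Fin (m i)) (Fin (m j)) F)
    (x : e.peirceSpace o i j) (Y : Matrix (Fin (m j)) (Fin (m k)) F) (y : e.peirceSpace o j k) :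
    e.ofPeirceSum o (DirectSum.lof F _ _ (i, j) (X ⊗ₜ x)) *
        e.ofPeirceSum o (DirectSum.lof F _ _ (j, k) (Y ⊗ₜ y)) =
      e.ofPeirceSum o (DirectSum.lof F _ _ (i, k) ((X * Y) ⊗ₜ e.peirceMul o i j k x y)) := by
  rw [ofPeirceSum_lof_tmul, ofPeirceSum_lof_tmul, ofPeirceSum_lof_tmul, coe_peirceMul]
  dsimp only
  calc _ = ∑ a, ∑ b, ∑ d : Fin (m k), (X a b * Y b d) • e.place o i k a d ((x : A) * y) := by
        simp_rw [Finset.sum_mul, Finset.mul_sum, smul_mul_smul_comm]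
        refine Finset.sum_congr rfl fun a _ => Finset.sum_congr rfl fun b _ => ?_
        rw [Finset.sum_eq_single b]
        · simp only [place_mul_place e o i j k a b _ x y.2]
        · intro c _ hc
          simp only [place_mul_place_eq_zero e o (e.unit_mul_unit_of_ne _ hc.symm _ _), smul_zero,
            Finset.sum_const_zero]
        · simp
    _ = _ := by
        simp only [Matrix.mul_apply, Finset.sum_smul]
        exact Finset.sum_congr rfl fun a _ => Finset.sum_comm

theorem ofPeirceSum_mul_eq_zero {i j s t : ι} (hjs : j ≠ s)
    (X : Matrix (Fin (m i)) (Fin (m j)) F) (x : e.peirceSpace o i j)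
    (Y : Matrix (Fin (m s)) (Fin (m t)) F) (y : e.peirceSpace o s t) :
    e.ofPeirceSum o (DirectSum.lof F _ _ (i, j) (X ⊗ₜ x)) *
      e.ofPeirceSum o (DirectSum.lof F _ _ (s, t) (Y ⊗ₜ y)) = 0 := by
  rw [ofPeirceSum_lof_tmul, ofPeirceSum_lof_tmul]
  simp only [Finset.sum_mul, Finset.mul_sum, smul_mul_smul_comm,
    place_mul_place_eq_zero e o (e.unit_mul_unit_of_ne_block hjs ..), smul_zero,
    Finset.sum_const_zero]

variable [Fintype ι]

def toPeirceSum : A →ₗ[F] e.PeirceSum o :=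
  ∑ p : ι × ι, DirectSum.lof F _ _ p ∘ₗ
    ∑ a, ∑ b, TensorProduct.mk F _ _ (Matrix.single a b 1) ∘ₗ e.extract o p.1 p.2 a b

theorem toPeirceSum_apply (x : A) :
    e.toPeirceSum o x = ∑ p : ι × ι, DirectSum.lof F _ _ p
      (∑ a, ∑ b, Matrix.single a b 1 ⊗ₜ e.extract o p.1 p.2 a b x) := by
  simp [toPeirceSum]

theorem ofPeirceSum_toPeirceSum (he : e.diagSum = 1) (x : A) :
    e.ofPeirceSum o (e.toPeirceSum o x) = x := by
  simp only [toPeirceSum_apply, map_sum, ofPeirceSum_lof_single_tmul, place_extract]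
  apply inr_injective (R := F)
  simp only [inr_sum, inr_sandwich]
  calc _ = (∑ i, ∑ a, e.unit i a a) * x * ∑ j, ∑ b, e.unit j b b := by
        rw [Finset.sum_mul, Finset.sum_mul_sum, Fintype.sum_prod_type]
        simp only [Finset.sum_mul, Finset.mul_sum]
        exact Finset.sum_congr rfl fun _ _ => Finset.sum_congr rfl fun _ _ => Finset.sum_comm
    _ = x := by
        change e.diagSum * _ * e.diagSum = _
        rw [he, one_mul, mul_one]

theorem toPeirceSum_place (p : ι × ι) (a : Fin (m p.1)) (b : Fin (m p.2))
    (x : e.peirceSpace o p.1 p.2) :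
    e.toPeirceSum o (e.place o p.1 p.2 a b x) =
      DirectSum.lof F _ _ p (Matrix.single a b 1 ⊗ₜ x) := by
  rw [toPeirceSum_apply, Finset.sum_eq_single p, Finset.sum_eq_single a, Finset.sum_eq_single b,
    extract_place_self]
  · intro b' _ hb
    rw [extract_place_of_right e o (e.unit_mul_unit_of_ne _ hb.symm _ _), TensorProduct.tmul_zero]
  · simp
  · intro a' _ ha
    refine Finset.sum_eq_zero fun b' _ => ?_
    rw [extract_place_of_left e o (e.unit_mul_unit_of_ne _ ha _ _), TensorProduct.tmul_zero]
  · simp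
  · rintro ⟨i, j⟩ _ hq
    have hzero : ∀ a' b', e.extract o i j a' b' (e.place o p.1 p.2 a b x) = 0 := by
      intro a' b'
      by_cases hi : i = p.1
      · have hj : p.2 ≠ j := fun hj => hq (Prod.ext hi hj.symm)
        exact extract_place_of_right e o (e.unit_mul_unit_of_ne_block hj ..) ..
      · exact extract_place_of_left e o (e.unit_mul_unit_of_ne_block hi ..) ..
    simp [hzero]
  · simp

theorem toPeirceSum_ofPeirceSum : e.toPeirceSum o ∘ₗ e.ofPeirceSum o = LinearMap.id := by
  refine DirectSum.linearMap_ext F fun p => TensorProduct.ext' fun X x => ?_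
  simp only [LinearMap.comp_apply, LinearMap.id_apply, ofPeirceSum_lof_tmul, map_sum, map_smul,
    toPeirceSum_place]
  conv_rhs => rw [Matrix.matrix_eq_sum_single X]
  simp only [TensorProduct.sum_tmul, map_sum, ← map_smul, TensorProduct.smul_tmul',
    Matrix.smul_single, smul_eq_mul, mul_one]

def peirceEquiv (he : e.diagSum = 1) : A ≃ₗ[F] e.PeirceSum o :=
  LinearEquiv.ofLinearMap (e.toPeirceSum o) (e.ofPeirceSum o) (e.toPeirceSum_ofPeirceSum o)
    (LinearMap.ext (e.ofPeirceSum_toPeirceSum o he))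

end MatrixUnits

theorem setOf_supported_eq_range {A ι T : Type*} [SetLike T A] {S : T} [DecidableEq ι]
    {B : ι → Type*} [∀ i, Zero (B i)] (f : S → ∀ i, B i) (hf : Function.Bijective f) (i : ι) :
    {a : A | ∃ h : a ∈ S, ∀ j, j ≠ i → f ⟨a, h⟩ j = 0} =
      Set.range fun X : B i => ((Equiv.ofBijective f hf).symm (Pi.single i X) : A) := by
  set g := Equiv.ofBijective f hf
  ext a
  constructor
  · rintro ⟨ha, hsupp⟩
    refine ⟨g ⟨a, ha⟩ i, ?_⟩
    have hsingle : Pi.single i (g ⟨a, ha⟩ i) = g ⟨a, ha⟩ := by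
      ext j
      rcases eq_or_ne j i with rfl | hj
      · simp
      · rw [Pi.single_eq_of_ne hj]
        exact (hsupp j hj).symm
    simp only [hsingle, Equiv.symm_apply_apply]
  · rintro ⟨X, rfl⟩
    refine ⟨(g.symm (Pi.single i X)).2, fun j hj => ?_⟩
    have : g (g.symm (Pi.single i X)) j = 0 := by simp [hj]
    exact this

namespace MatrixUnits

open Unitization

variable {F : Type*} [CommRing F] {A : Type*} [NonUnitalRing A] [Module F A]
  [SMulCommClass F A A] [IsScalarTower F A A] {I : Type} [Fintype I] [DecidableEq I] {n : I → ℕ}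
  (φ : (∀ i, Matrix (Fin (n i)) (Fin (n i)) F) →ₙₐ[F] A)

def ofPiMatrixHom : MatrixUnits (Unitization F A) (nopt n) :=
  ((std F n).map ((inrNonUnitalAlgHom F A).comp φ)).completion

theorem ofPiMatrixHom_unit_some (i : I) (a b : Fin (n i)) :
    (ofPiMatrixHom φ).unit (some i) a b =
      (φ (Pi.single i (Matrix.single a b 1)) : Unitization F A) :=
  rfl

theorem ofPeirceSum_ofPiMatrixHom (o : ∀ i, Fin (nopt n i)) (i : I)
    (X : Matrix (Fin (n i)) (Fin (n i)) F) :
    (ofPiMatrixHom φ).ofPeirceSum o (DirectSum.lof F _ _ (some i, some i)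
      (X ⊗ₜ ⟨_, diag_mem_peirceSpace _ o (ofPiMatrixHom_unit_some φ i _ _).symm⟩)) =
      φ (Pi.single i X) := by
  apply inr_injective (R := F)
  rw [inr_ofPeirceSum_lof_tmul_diag (hx := (ofPiMatrixHom_unit_some φ i _ _).symm),
    ← sum_smul_std_unit F i X]
  simp only [map_sum, map_smul, inr_sum, inr_smul]
  rfl

end MatrixUnits

theorem algebra_matrix_decomposition_general
    (F : Type u) [Field F]
    (A : Type v) [NonUnitalRing A] [Module F A] [SMulCommClass F A A] [IsScalarTower F A A]
    (S : NonUnitalSubalgebra F A)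
    (I : Type) [Fintype I] [DecidableEq I] (n : I → ℕ) (hn : ∀ i, 0 < n i)
    (f : S →ₙₐ[F] ∀ i, Matrix (Fin (n i)) (Fin (n i)) F) (hf : Function.Bijective f) :
    Nonempty (MatrixAlgDecomp F A S I n f) := by
  let φ := (NonUnitalSubalgebraClass.subtype S).comp
    (f.inverse _ (Equiv.ofBijective f hf).left_inv (Equiv.ofBijective f hf).right_inv)
  let e := MatrixUnits.ofPiMatrixHom φ
  let o : ∀ i, Fin (nopt n i) := Option.rec 0 fun i => ⟨0, hn i⟩
  have he : e.diagSum = 1 := MatrixUnits.diagSum_completion _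
  have hone i := (MatrixUnits.ofPiMatrixHom_unit_some φ i (o (some i)) (o (some i))).symm
  have himage i X : e.peirceEquiv o he ((Equiv.ofBijective f hf).symm (Pi.single i X)) =
      DirectSum.lof F _ _ (some i, some i) (X ⊗ₜ ⟨_, e.diag_mem_peirceSpace o (hone i)⟩) :=
    ((e.peirceEquiv o he).symm_apply_eq.mp (MatrixUnits.ofPeirceSum_ofPiMatrixHom φ o i X)).symm
  refine ⟨{
    Lam := fun i j => e.peirceSpace o i j
    mu := e.peirceMul o
    assoc := fun _ _ _ _ x y z => Subtype.ext (mul_assoc (x : A) y z)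
    one := fun i => ⟨_, e.diag_mem_peirceSpace o (hone i)⟩
    one_mul := fun i => e.diag_peirceMul o (hone i)
    mul_one := fun i => e.peirceMul_diag o (hone i)
    θ := e.peirceEquiv o he
    map_mul := e.ofPeirceSum_mul o
    map_mul_zero := fun _ _ _ _ h => e.ofPeirceSum_mul_eq_zero o h
    comp_image := fun i => ?_ }⟩
  rw [setOf_supported_eq_range f hf i, ← Set.range_comp]
  ext y
  simp [himage, eq_comm]

theorem algebra_matrix_decomposition
    (F : Type u) [Field F] [IsAlgClosed F]
    (A : Type v) [NonUnitalRing A] [Module F A] [SMulCommClass F A A] [IsScalarTower F A A]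
    (S : NonUnitalSubalgebra F A) (hS_ne : S ≠ ⊥)
    (I : Type) [Fintype I] [DecidableEq I] (n : I → ℕ) (hn : ∀ i, 0 < n i)
    (f : S →ₙₐ[F] ∀ i, Matrix (Fin (n i)) (Fin (n i)) F) (hf : Function.Bijective f) :
    Nonempty (MatrixAlgDecomp F A S I n f) :=
  algebra_matrix_decomposition_general F A S I n hn f hf
end

section
/- Let A be an associative F-algebra containing a non-zero finite-dimensional semisimple subalgebra S, and let B be a subalgebra of A with SB + BS ⊆ B. Let B_S be the subalgebra of B generated by all non-trivial simple S-sub-bimodules of B. Then B_S is a two-sided ideal of B. -/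
/-!
Transporting the matrix units `E i a b` along `S ≅ ∏ Mₙᵢ(F)` gives `S` an identity
`e = ∑ E i a a`. In a non-trivial simple sub-bimodule `W`, the elements of `W` killed by
`w ↦ (1 - e) w (1 - e)` form a sub-bimodule containing `SW + WS ≠ 0`, so every `w ∈ W` satisfies
`w = ew + we - ewe`. Hence `bw = (be)(ew) + (b(w - ew))e` and symmetrically for `wb`, and it
suffices that `eB` and `Be` lie in `B_S`. Split `ex = exe + e(x - xe)`: if
`E i k k * x * E j l l ≠ 0`, the elements `E i a k * x * E j l b` span a non-trivial simple
sub-bimodule of `B`, because matrix units carry any nonzero combination of them back to each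
of them; likewise for the `E i a k * y` with `yS = 0`, and symmetrically on the right.
-/

universe u v

variable (F : Type u) {A : Type v} [Field F] [NonUnitalRing A] [Module F A]
  [SMulCommClass F A A] [IsScalarTower F A A]

/-- `W` is an `S`-sub-bimodule (of `A`): an `F`-subspace with `SW + WS ⊆ W`. -/
def IsSubBimod (S : NonUnitalSubalgebra F A) (W : Submodule F A) : Prop :=
  ∀ s ∈ S, ∀ w ∈ W, s * w ∈ W ∧ w * s ∈ W

/-- The non-trivial simple `S`-sub-bimodules contained in a subset `B` of `A`. -/
def SimpleBimods (S : NonUnitalSubalgebra F A) (B : Set A) : Set (Submodule F A) :=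
  {W | (W : Set A) ⊆ B ∧ W ≠ ⊥ ∧ IsSubBimod F S W ∧
    -- non-trivial: `SW + WS ≠ 0`
    (∃ s ∈ S, ∃ w ∈ W, s * w ≠ 0 ∨ w * s ≠ 0) ∧
    -- simple: the only `S`-sub-bimodules of `W` are `0` and `W`
    (∀ W' : Submodule F A, W' ≤ W → IsSubBimod F S W' → W' = ⊥ ∨ W' = W)}

/-- The subalgebra generated by the non-trivial simple `S`-sub-bimodules of `B`
(denoted `B_S` in the paper). -/
def modGenSubalg (S : NonUnitalSubalgebra F A) (B : Set A) : NonUnitalSubalgebra F A :=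
  NonUnitalAlgebra.adjoin F (⋃ W ∈ SimpleBimods F S B, (W : Set A))

namespace Matrix

variable {R : Type*} [Semiring R] {l m n : Type*} [Fintype m] [DecidableEq m]

lemma mul_single_one_eq_sum [Fintype l] [DecidableEq l] [DecidableEq n]
    (M : Matrix l m R) (a : m) (k : n) :
    M * single a k (1 : R) = ∑ c, M c a • single c k 1 := by
  ext r t
  simp [mul_apply, single, sum_apply, ite_and]

lemma single_one_mul_eq_sum [Fintype n] [DecidableEq l] [DecidableEq n]
    (M : Matrix m n R) (k : l) (a : m) :
    single k a (1 : R) * M = ∑ c, M a c • single k c 1 := by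
  ext r t
  simp [mul_apply, single, sum_apply, ite_and]

end Matrix

section MatrixUnits

omit [SMulCommClass F A A] [IsScalarTower F A A]

variable {F} {S : NonUnitalSubalgebra F A} {m : ℕ} {n : Fin m → ℕ}
  (f : S →ₙₐ[F] ∀ i, Matrix (Fin (n i)) (Fin (n i)) F) (hf : Function.Bijective f)

noncomputable def matrixUnit (i : Fin m) (a b : Fin (n i)) : S :=
  (Equiv.ofBijective f hf).symm (Pi.single i (Matrix.single a b 1))

lemma apply_matrixUnit (i : Fin m) (a b : Fin (n i)) :
    f (matrixUnit f hf i a b) = Pi.single i (Matrix.single a b 1) :=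
  (Equiv.ofBijective f hf).apply_symm_apply _

lemma matrixUnit_mul_matrixUnit (i : Fin m) (a b c d : Fin (n i)) :
    (matrixUnit f hf i a b : A) * matrixUnit f hf i c d =
      if b = c then (matrixUnit f hf i a d : A) else 0 := by
  have h : matrixUnit f hf i a b * matrixUnit f hf i c d =
      if b = c then matrixUnit f hf i a d else 0 := hf.injective <| by
    split_ifs with hbc
    · subst hbc; simp [apply_matrixUnit, ← Pi.single_mul]
    · simp [apply_matrixUnit, ← Pi.single_mul, hbc]
  rw [← MulMemClass.coe_mul, h]
  split_ifs <;> rfl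

lemma mul_matrixUnit {s : A} (hs : s ∈ S) (i : Fin m) (a k : Fin (n i)) :
    s * matrixUnit f hf i a k = ∑ c, f ⟨s, hs⟩ i c a • (matrixUnit f hf i c k : A) := by
  have h : ⟨s, hs⟩ * matrixUnit f hf i a k =
      ∑ c, f ⟨s, hs⟩ i c a • matrixUnit f hf i c k := hf.injective <| by
    rw [map_mul, apply_matrixUnit, ← Pi.single_mul_right, Matrix.mul_single_one_eq_sum,
      ← LinearMap.single_apply F, map_sum, map_sum]
    simp [apply_matrixUnit, ← Pi.single_smul]
  simpa using congrArg Subtype.val h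

lemma matrixUnit_mul {s : A} (hs : s ∈ S) (i : Fin m) (k l : Fin (n i)) :
    matrixUnit f hf i k l * s = ∑ c, f ⟨s, hs⟩ i l c • (matrixUnit f hf i k c : A) := by
  have h : matrixUnit f hf i k l * ⟨s, hs⟩ =
      ∑ c, f ⟨s, hs⟩ i l c • matrixUnit f hf i k c := hf.injective <| by
    rw [map_mul, apply_matrixUnit, ← Pi.single_mul_left, Matrix.single_one_mul_eq_sum,
      ← LinearMap.single_apply F, map_sum, map_sum]
    simp [apply_matrixUnit, ← Pi.single_smul]
  simpa using congrArg Subtype.val h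

noncomputable def matrixOne : S :=
  ∑ i, ∑ a, matrixUnit f hf i a a

lemma apply_matrixOne : f (matrixOne f hf) = 1 := by
  rw [matrixOne, map_sum, ← Finset.univ_sum_single 1]
  refine Finset.sum_congr rfl fun i _ => ?_
  rw [map_sum, Pi.one_apply, ← Matrix.sum_single_one, ← LinearMap.single_apply F, map_sum]
  simp [apply_matrixUnit]

lemma coe_matrixOne : (matrixOne f hf : A) = ∑ i, ∑ a, (matrixUnit f hf i a a : A) := by
  simp [matrixOne]

lemma matrixOne_mul {s : A} (hs : s ∈ S) : matrixOne f hf * s = s :=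
  congrArg Subtype.val (hf.injective (by rw [map_mul, apply_matrixOne, one_mul]) :
    matrixOne f hf * ⟨s, hs⟩ = ⟨s, hs⟩)

lemma mul_matrixOne {s : A} (hs : s ∈ S) : s * matrixOne f hf = s :=
  congrArg Subtype.val (hf.injective (by rw [map_mul, apply_matrixOne, mul_one]) :
    ⟨s, hs⟩ * matrixOne f hf = ⟨s, hs⟩)

end MatrixUnits

section SubBimodules

variable {F} {S : NonUnitalSubalgebra F A}

lemma isSubBimod_span {X : Set A}
    (hX : ∀ s ∈ S, ∀ x ∈ X, s * x ∈ Submodule.span F X ∧ x * s ∈ Submodule.span F X) :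
    IsSubBimod F S (Submodule.span F X) := by
  intro s hs w hw
  have hleft : (Submodule.span F X).map (LinearMap.mulLeft F s) ≤ Submodule.span F X := by
    rw [Submodule.map_span, Submodule.span_le]
    rintro _ ⟨x, hx, rfl⟩
    exact (hX s hs x hx).1
  have hright : (Submodule.span F X).map (LinearMap.mulRight F s) ≤ Submodule.span F X := by
    rw [Submodule.map_span, Submodule.span_le]
    rintro _ ⟨x, hx, rfl⟩
    exact (hX s hs x hx).2
  exact ⟨hleft ⟨w, hw, rfl⟩, hright ⟨w, hw, rfl⟩⟩

omit [SMulCommClass F A A] [IsScalarTower F A A] in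
lemma span_range_mem_simpleBimods {B : NonUnitalSubalgebra F A} {κ : Type*} [Fintype κ]
    [DecidableEq κ] {v : κ → A} (hvB : ∀ a, v a ∈ B)
    (hv : IsSubBimod F S (Submodule.span F (Set.range v)))
    (htrans : ∀ a b, ∃ T : A →ₗ[F] A,
      (∀ W, IsSubBimod F S W → ∀ w ∈ W, T w ∈ W) ∧
        ∀ c, T (v c) = if c = a then v b else 0)
    (hnt : ∃ s ∈ S, ∃ a, s * v a ≠ 0 ∨ v a * s ≠ 0) :
    Submodule.span F (Set.range v) ∈ SimpleBimods F S B := by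
  obtain ⟨s, hs, a, hsa⟩ := hnt
  have hva : v a ∈ Submodule.span F (Set.range v) := Submodule.subset_span ⟨a, rfl⟩
  refine ⟨fun x hx => ?_, fun hbot => ?_, hv, ⟨s, hs, v a, hva, hsa⟩, fun W hWle hW => ?_⟩
  · exact (Submodule.span_le (p := B.toSubmodule)).2 (Set.range_subset_iff.2 hvB) hx
  · rw [hbot, Submodule.mem_bot] at hva
    simp [hva] at hsa
  · refine or_iff_not_imp_left.2 fun hW0 => ?_
    obtain ⟨u, hu, hu0⟩ := W.ne_bot_iff.1 hW0
    obtain ⟨c, rfl⟩ := (Submodule.mem_span_range_iff_exists_fun F).1 (hWle hu)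
    obtain ⟨a, ha⟩ : ∃ a, c a ≠ 0 := by
      by_contra! h
      simp [h] at hu0
    refine le_antisymm hWle (Submodule.span_le.2 (Set.range_subset_iff.2 fun b => ?_))
    obtain ⟨T, hTW, hTv⟩ := htrans a b
    have hT : T (∑ i, c i • v i) = c a • v b := by simp [hTv]
    have hvb := hTW W hW _ hu
    rw [hT] at hvb
    exact (W.smul_mem_iff ha).1 hvb

lemma subset_modGenSubalg {B : Set A} {W : Submodule F A} (hW : W ∈ SimpleBimods F S B) :
    (W : Set A) ⊆ modGenSubalg F S B :=
  fun _ hw => NonUnitalAlgebra.subset_adjoin F (Set.mem_biUnion hW hw)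

lemma modGenSubalg_subset (B : NonUnitalSubalgebra F A) :
    (modGenSubalg F S (B : Set A) : Set A) ⊆ B :=
  NonUnitalAlgebra.adjoin_le (Set.iUnion₂_subset fun _ hW => hW.1)

lemma peirce_eq_of_mem_simpleBimods {B : Set A} {W : Submodule F A}
    (hW : W ∈ SimpleBimods F S B) {e : A} (he : ∀ s ∈ S, e * s = s ∧ s * e = s)
    {w : A} (hw : w ∈ W) :
    e * w + w * e - e * w * e = w := by
  obtain ⟨-, -, hWS, ⟨s, hs, w₀, hw₀, hsw₀⟩, hWsimple⟩ := hW
  let D : A →ₗ[F] A :=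
    (LinearMap.id - LinearMap.mulLeft F e) ∘ₗ (LinearMap.id - LinearMap.mulRight F e)
  have hD : ∀ u, D u = u - u * e - e * (u - u * e) := fun _ => rfl
  have hDl : ∀ t ∈ S, ∀ u, D (t * u) = 0 := fun t ht u => by
    simp [hD, mul_sub, ← mul_assoc, (he t ht).1]
  have hDr : ∀ t ∈ S, ∀ u, D (u * t) = 0 := fun t ht u => by
    simp [hD, mul_assoc, (he t ht).2]
  have hK : IsSubBimod F S (W ⊓ LinearMap.ker D) := fun t ht u hu =>
    ⟨⟨(hWS t ht u hu.1).1, hDl t ht u⟩, ⟨(hWS t ht u hu.1).2, hDr t ht u⟩⟩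
  have hK0 : W ⊓ LinearMap.ker D ≠ ⊥ := by
    rw [Submodule.ne_bot_iff]
    rcases hsw₀ with h | h
    · exact ⟨s * w₀, ⟨(hWS s hs w₀ hw₀).1, hDl s hs w₀⟩, h⟩
    · exact ⟨w₀ * s, ⟨(hWS s hs w₀ hw₀).2, hDr s hs w₀⟩, h⟩
  have hWK : W ⊓ LinearMap.ker D = W := (hWsimple _ inf_le_left hK).resolve_left hK0
  have hDw : D w = 0 := (hWK.symm ▸ hw : w ∈ W ⊓ LinearMap.ker D).2
  rw [hD] at hDw
  rw [← sub_eq_zero, ← neg_eq_zero, ← hDw]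
  noncomm_ring

end SubBimodules

section Ideal

variable {F}

lemma mul_mem_adjoin_left {X : Set A} {b y : A}
    (hX : ∀ x ∈ X, b * x ∈ NonUnitalAlgebra.adjoin F X)
    (hy : y ∈ NonUnitalAlgebra.adjoin F X) :
    b * y ∈ NonUnitalAlgebra.adjoin F X := by
  induction hy using NonUnitalAlgebra.adjoin_induction with
  | mem x hx => exact hX x hx
  | add x y _ _ hx hy => rw [mul_add]; exact add_mem hx hy
  | zero => rw [mul_zero]; exact zero_mem _
  | mul x y _ hy hx _ => rw [← mul_assoc]; exact mul_mem hx hy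
  | smul r x _ hx => rw [mul_smul_comm]; exact SMulMemClass.smul_mem r hx

lemma mul_mem_adjoin_right {X : Set A} {b y : A}
    (hX : ∀ x ∈ X, x * b ∈ NonUnitalAlgebra.adjoin F X)
    (hy : y ∈ NonUnitalAlgebra.adjoin F X) :
    y * b ∈ NonUnitalAlgebra.adjoin F X := by
  induction hy using NonUnitalAlgebra.adjoin_induction with
  | mem x hx => exact hX x hx
  | add x y _ _ hx hy => rw [add_mul]; exact add_mem hx hy
  | zero => rw [zero_mul]; exact zero_mem _
  | mul x y hx _ _ hy => rw [mul_assoc]; exact mul_mem hx hy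
  | smul r x _ hx => rw [smul_mul_assoc]; exact SMulMemClass.smul_mem r hx

variable {S B : NonUnitalSubalgebra F A}

lemma modGenSubalg_isIdeal_of_unit (hSB : ∀ s ∈ S, ∀ b ∈ B, s * b ∈ B ∧ b * s ∈ B)
    {e : A} (heS : e ∈ S) (he : ∀ s ∈ S, e * s = s ∧ s * e = s)
    (hBe : ∀ x ∈ B, e * x ∈ modGenSubalg F S B ∧ x * e ∈ modGenSubalg F S B)
    {b x : A} (hb : b ∈ B) (hx : x ∈ modGenSubalg F S B) :
    b * x ∈ modGenSubalg F S B ∧ x * b ∈ modGenSubalg F S B := by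
  have hee : e * e = e := (he e heS).1
  have hgen : ∀ w ∈ ⋃ W ∈ SimpleBimods F S B, (W : Set A),
      b * w ∈ modGenSubalg F S B ∧ w * b ∈ modGenSubalg F S B := by
    intro w hw
    obtain ⟨W, hW, hwW⟩ := Set.mem_iUnion₂.1 hw
    have hwB : w ∈ B := hW.1 hwW
    have hw := peirce_eq_of_mem_simpleBimods hW he hwW
    have hbw : b * w = b * e * (e * w) + b * (w - e * w) * e := by
      conv_lhs => rw [← hw]
      rw [mul_assoc b e, ← mul_assoc e e, hee]
      noncomm_ring
    have hwb : w * b = w * e * (e * b) + e * ((w - w * e) * b) := by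
      conv_lhs => rw [← hw]
      rw [mul_assoc w e, ← mul_assoc e e, hee]
      noncomm_ring
    have hbw' : b * (w - e * w) ∈ B := mul_mem hb (sub_mem hwB (hSB e heS w hwB).1)
    have hwb' : (w - w * e) * b ∈ B := mul_mem (sub_mem hwB (hSB e heS w hwB).2) hb
    rw [hbw, hwb]
    exact ⟨add_mem (mul_mem (hBe b hb).2 (hBe w hwB).1) (hBe _ hbw').2,
      add_mem (mul_mem (hBe w hwB).2 (hBe b hb).1) (hBe _ hwb').1⟩
  exact ⟨mul_mem_adjoin_left (fun w hw => (hgen w hw).1) hx,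
    mul_mem_adjoin_right (fun w hw => (hgen w hw).2) hx⟩

end Ideal

section MatrixUnitBimodules

variable {F} {S B : NonUnitalSubalgebra F A} {m : ℕ} {n : Fin m → ℕ}
  (f : S →ₙₐ[F] ∀ i, Matrix (Fin (n i)) (Fin (n i)) F) (hf : Function.Bijective f)
  (hSB : ∀ s ∈ S, ∀ b ∈ B, s * b ∈ B ∧ b * s ∈ B)

include hSB

local notation "E" => matrixUnit f hf

lemma matrixUnit_mul_mul_matrixUnit_mem_modGenSubalg {x : A} (hx : x ∈ B)
    (i : Fin m) (k : Fin (n i)) (j : Fin m) (l : Fin (n j)) :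
    (E i k k : A) * x * E j l l ∈ modGenSubalg F S B := by
  by_cases h0 : (E i k k : A) * x * E j l l = 0
  · rw [h0]; exact zero_mem _
  let v : Fin (n i) × Fin (n j) → A := fun p => E i p.1 k * x * E j l p.2
  have hv : ∀ p, v p ∈ Submodule.span F (Set.range v) :=
    fun p => Submodule.subset_span ⟨p, rfl⟩
  refine subset_modGenSubalg
    (span_range_mem_simpleBimods (v := v) (fun p => ?_) ?_ ?_ ?_) (hv (k, l))
  · exact (hSB _ (E j l p.2).2 _ (hSB _ (E i p.1 k).2 x hx).1).2
  · refine isSubBimod_span ?_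
    rintro s hs _ ⟨p, rfl⟩
    constructor
    · rw [← mul_assoc, ← mul_assoc, mul_matrixUnit f hf hs, Finset.sum_mul, Finset.sum_mul]
      refine sum_mem fun c _ => ?_
      rw [smul_mul_assoc, smul_mul_assoc]
      exact Submodule.smul_mem _ _ (hv (c, p.2))
    · rw [mul_assoc, matrixUnit_mul f hf hs, Finset.mul_sum]
      refine sum_mem fun c _ => ?_
      rw [mul_smul_comm]
      exact Submodule.smul_mem _ _ (hv (p.1, c))
  · intro p q
    refine ⟨LinearMap.mulLeft F (E i q.1 p.1 : A) ∘ₗ LinearMap.mulRight F (E j p.2 q.2 : A),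
      fun W hW w hw => (hW _ (E i q.1 p.1).2 _ (hW _ (E j p.2 q.2).2 w hw).2).1, fun r => ?_⟩
    change (E i q.1 p.1 : A) * (E i r.1 k * x * E j l r.2 * E j p.2 q.2) = _
    simp only [mul_assoc]
    rw [← mul_assoc (E i q.1 p.1 : A), matrixUnit_mul_matrixUnit, matrixUnit_mul_matrixUnit]
    by_cases h1 : p.1 = r.1 <;> by_cases h2 : r.2 = p.2 <;>
      simp [h1, h2, Prod.ext_iff, v, mul_assoc, @eq_comm _ r.1]
  · refine ⟨E i k k, (E i k k).2, (k, l), Or.inl ?_⟩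
    rwa [← mul_assoc, ← mul_assoc, matrixUnit_mul_matrixUnit, if_pos rfl]

lemma matrixUnit_mul_mem_modGenSubalg {x : A} (hx : x ∈ B) (hxS : ∀ s ∈ S, x * s = 0)
    (i : Fin m) (k : Fin (n i)) :
    (E i k k : A) * x ∈ modGenSubalg F S B := by
  by_cases h0 : (E i k k : A) * x = 0
  · rw [h0]; exact zero_mem _
  let v : Fin (n i) → A := fun a => E i a k * x
  have hv : ∀ a, v a ∈ Submodule.span F (Set.range v) :=
    fun a => Submodule.subset_span ⟨a, rfl⟩
  refine subset_modGenSubalg (span_range_mem_simpleBimods (v := v) (fun a => ?_) ?_ ?_ ?_) (hv k)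
  · exact (hSB _ (E i a k).2 x hx).1
  · refine isSubBimod_span ?_
    rintro s hs _ ⟨a, rfl⟩
    constructor
    · rw [← mul_assoc, mul_matrixUnit f hf hs, Finset.sum_mul]
      refine sum_mem fun c _ => ?_
      rw [smul_mul_assoc]
      exact Submodule.smul_mem _ _ (hv c)
    · rw [mul_assoc, hxS s hs, mul_zero]
      exact zero_mem _
  · intro a b
    refine ⟨LinearMap.mulLeft F (E i b a : A), fun W hW w hw => (hW _ (E i b a).2 w hw).1,
      fun c => ?_⟩
    change (E i b a : A) * (E i c k * x) = _
    rw [← mul_assoc, matrixUnit_mul_matrixUnit]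
    by_cases h : c = a <;> simp [h, v, @eq_comm _ a]
  · refine ⟨E i k k, (E i k k).2, k, Or.inl ?_⟩
    rwa [← mul_assoc, matrixUnit_mul_matrixUnit, if_pos rfl]

lemma mul_matrixUnit_mem_modGenSubalg {x : A} (hx : x ∈ B) (hxS : ∀ s ∈ S, s * x = 0)
    (j : Fin m) (l : Fin (n j)) :
    x * E j l l ∈ modGenSubalg F S B := by
  by_cases h0 : x * E j l l = 0
  · rw [h0]; exact zero_mem _
  let v : Fin (n j) → A := fun b => x * E j l b
  have hv : ∀ b, v b ∈ Submodule.span F (Set.range v) :=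
    fun b => Submodule.subset_span ⟨b, rfl⟩
  refine subset_modGenSubalg (span_range_mem_simpleBimods (v := v) (fun b => ?_) ?_ ?_ ?_) (hv l)
  · exact (hSB _ (E j l b).2 x hx).2
  · refine isSubBimod_span ?_
    rintro s hs _ ⟨b, rfl⟩
    constructor
    · rw [← mul_assoc, hxS s hs, zero_mul]
      exact zero_mem _
    · rw [mul_assoc, matrixUnit_mul f hf hs, Finset.mul_sum]
      refine sum_mem fun c _ => ?_
      rw [mul_smul_comm]
      exact Submodule.smul_mem _ _ (hv c)
  · intro b c
    refine ⟨LinearMap.mulRight F (E j b c : A), fun W hW w hw => (hW _ (E j b c).2 w hw).2,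
      fun d => ?_⟩
    change x * E j l d * E j b c = _
    rw [mul_assoc, matrixUnit_mul_matrixUnit]
    by_cases h : d = b <;> simp [h, v]
  · refine ⟨E j l l, (E j l l).2, l, Or.inr ?_⟩
    rwa [mul_assoc, matrixUnit_mul_matrixUnit, if_pos rfl]

lemma matrixOne_mul_mul_matrixOne_mem_modGenSubalg {x : A} (hx : x ∈ B) :
    (matrixOne f hf : A) * x * matrixOne f hf ∈ modGenSubalg F S B := by
  simp only [coe_matrixOne, Finset.sum_mul, Finset.mul_sum]
  exact sum_mem fun j _ => sum_mem fun b _ => sum_mem fun i _ => sum_mem fun a _ =>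
    matrixUnit_mul_mul_matrixUnit_mem_modGenSubalg f hf hSB hx i a j b

lemma matrixOne_mul_mem_modGenSubalg_of_mul_eq_zero {x : A} (hx : x ∈ B)
    (hxS : ∀ s ∈ S, x * s = 0) : (matrixOne f hf : A) * x ∈ modGenSubalg F S B := by
  simp only [coe_matrixOne, Finset.sum_mul]
  exact sum_mem fun i _ => sum_mem fun a _ =>
    matrixUnit_mul_mem_modGenSubalg f hf hSB hx hxS i a

lemma mul_matrixOne_mem_modGenSubalg_of_mul_eq_zero {x : A} (hx : x ∈ B)
    (hxS : ∀ s ∈ S, s * x = 0) : x * matrixOne f hf ∈ modGenSubalg F S B := by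
  simp only [coe_matrixOne, Finset.mul_sum]
  exact sum_mem fun j _ => sum_mem fun b _ =>
    mul_matrixUnit_mem_modGenSubalg f hf hSB hx hxS j b

lemma matrixOne_mul_mem_modGenSubalg {x : A} (hx : x ∈ B) :
    (matrixOne f hf : A) * x ∈ modGenSubalg F S B := by
  have hxe : x - x * matrixOne f hf ∈ B := sub_mem hx (hSB _ (matrixOne f hf).2 x hx).2
  have hxeS : ∀ s ∈ S, (x - x * matrixOne f hf) * s = 0 := fun s hs => by
    rw [sub_mul, mul_assoc, matrixOne_mul f hf hs, sub_self]
  rw [show (matrixOne f hf : A) * x = matrixOne f hf * x * matrixOne f hf +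
      matrixOne f hf * (x - x * matrixOne f hf) by noncomm_ring]
  exact add_mem (matrixOne_mul_mul_matrixOne_mem_modGenSubalg f hf hSB hx)
    (matrixOne_mul_mem_modGenSubalg_of_mul_eq_zero f hf hSB hxe hxeS)

lemma mul_matrixOne_mem_modGenSubalg {x : A} (hx : x ∈ B) :
    x * matrixOne f hf ∈ modGenSubalg F S B := by
  have hex : x - matrixOne f hf * x ∈ B := sub_mem hx (hSB _ (matrixOne f hf).2 x hx).1
  have hexS : ∀ s ∈ S, s * (x - matrixOne f hf * x) = 0 := fun s hs => by
    rw [mul_sub, ← mul_assoc, mul_matrixOne f hf hs, sub_self]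
  rw [show x * (matrixOne f hf : A) = matrixOne f hf * x * matrixOne f hf +
      (x - matrixOne f hf * x) * matrixOne f hf by noncomm_ring]
  exact add_mem (matrixOne_mul_mul_matrixOne_mem_modGenSubalg f hf hSB hx)
    (mul_matrixOne_mem_modGenSubalg_of_mul_eq_zero f hf hSB hex hexS)

end MatrixUnitBimodules

theorem modGenSubalg_isIdeal
    (S : NonUnitalSubalgebra F A) (hS_ss : IsMatrixSemisimple F S)
    (B : NonUnitalSubalgebra F A)
    (hSB : ∀ s ∈ S, ∀ b ∈ B, s * b ∈ B ∧ b * s ∈ B) :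
    (modGenSubalg F S (B : Set A) : Set A) ⊆ (B : Set A) ∧
    ∀ b ∈ B, ∀ x ∈ modGenSubalg F S (B : Set A),
      b * x ∈ modGenSubalg F S (B : Set A) ∧ x * b ∈ modGenSubalg F S (B : Set A) := by
  obtain ⟨m, n, -, f, hf⟩ := hS_ss
  refine ⟨modGenSubalg_subset B, fun b hb x hx => ?_⟩
  exact modGenSubalg_isIdeal_of_unit hSB (matrixOne f hf).2
    (fun s hs => ⟨matrixOne_mul f hf hs, mul_matrixOne f hf hs⟩)
    (fun y hy => ⟨matrixOne_mul_mem_modGenSubalg f hf hSB hy,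
      mul_matrixOne_mem_modGenSubalg f hf hSB hy⟩)
    hb hx
end

section
/- Let A be a perfect finite-dimensional associative F-algebra (i.e. the linear span of all products xy with x, y ∈ A equals A) and let S be a Levi subalgebra of A. Then A is S-modgenerated, i.e. A is generated as an algebra by its non-trivial simple S-sub-bimodules. -/
/-!
Write `e = ∑ E^i_pp` for the identity of `S`, built from matrix units `E^i_pq`. If
`E^i_00 x E^j_00 = x ≠ 0`, the span of `S x S` is a non-trivial simple bimodule: every
corner `E^k_0p y E^l_q0` of its elements is a multiple of `x`, and some corner of a nonzero
element is nonzero. The same holds for the span of `S x` when `E^i_00 x = x` and `x e = 0`, and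
symmetrically. Expanding along the matrix units, `eA` and `Ae` lie in `A_S`, hence so does the
ideal `AeA = (Ae)(eA)`. Since `A = S ⊕ rad A`, the left annihilator `N` of `e` lies in the
nilpotent radical, and `A = AeA + N`. Perfectness now gives `A = A^k ⊆ AeA + N^k = AeA`.
-/

universe u v

variable (F : Type u) {A : Type v} [Field F] [NonUnitalRing A] [Module F A]
  [SMulCommClass F A A] [IsScalarTower F A A]

/-- Powers `J, J², J³, …` of a subspace `J` of `A`: `subPow J k = J^(k+1)`. -/
def subPow (J : Submodule F A) : ℕ → Submodule F A
  | 0 => J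
  | k + 1 => Submodule.span F {x : A | ∃ a ∈ subPow J k, ∃ b ∈ J, x = a * b}

/-- The (Jacobson) radical of the finite-dimensional algebra `A`: the largest
nilpotent two-sided ideal, i.e. the sum of all nilpotent two-sided ideals. -/
def radSub : Submodule F A :=
  sSup {J : Submodule F A |
    (∀ a : A, ∀ x ∈ J, a * x ∈ J ∧ x * a ∈ J) ∧ ∃ k : ℕ, subPow F J k = ⊥}

def IsIdealSub (J : Submodule F A) : Prop :=
  ∀ a : A, ∀ x ∈ J, a * x ∈ J ∧ x * a ∈ J

def IsNilpotentIdeal (J : Submodule F A) : Prop :=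
  IsIdealSub F J ∧ ∃ k, subPow F J k = ⊥

namespace Submodule

variable {F} {A : Type*} [NonUnitalRing A] [Module F A]

lemma mul_left_mem_of_mem_span [SMulCommClass F A A] {T : Set A} {p : Submodule F A} {a : A}
    (h : ∀ t ∈ T, a * t ∈ p) : ∀ x ∈ span F T, a * x ∈ p :=
  fun _ hx => (span_le (p := p.comap (LinearMap.mulLeft F a))).2 h hx

lemma mul_right_mem_of_mem_span [IsScalarTower F A A] {T : Set A} {p : Submodule F A} {a : A}
    (h : ∀ t ∈ T, t * a ∈ p) : ∀ x ∈ span F T, x * a ∈ p :=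
  fun _ hx => (span_le (p := p.comap (LinearMap.mulRight F a))).2 h hx

lemma mul_mul_mem_of_mem_span [SMulCommClass F A A] [IsScalarTower F A A] {T : Set A}
    {p : Submodule F A} {a b : A} (h : ∀ t ∈ T, a * t * b ∈ p) : ∀ x ∈ span F T, a * x * b ∈ p :=
  fun _ hx => (span_le (p := p.comap (LinearMap.mulLeftRight F (a, b)))).2 h hx

lemma mul_eq_self_of_mem_span [SMulCommClass F A A] {T : Set A} {e : A}
    (h : ∀ t ∈ T, e * t = t) : ∀ x ∈ span F T, e * x = x :=
  fun _ hx => (span_le (p := LinearMap.eqLocus (LinearMap.mulLeft F e) LinearMap.id)).2 h hx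

lemma mul_eq_self_of_mem_span' [IsScalarTower F A A] {T : Set A} {e : A}
    (h : ∀ t ∈ T, t * e = t) : ∀ x ∈ span F T, x * e = x :=
  fun _ hx => (span_le (p := LinearMap.eqLocus (LinearMap.mulRight F e) LinearMap.id)).2 h hx

lemma mem_of_mem_of_mem_span_singleton {p : Submodule F A} {x y : A} (hy : y ∈ p)
    (hyx : y ∈ F ∙ x) (hy0 : y ≠ 0) : x ∈ p := by
  obtain ⟨a, rfl⟩ := mem_span_singleton.1 hyx
  exact (smul_mem_iff p (left_ne_zero_of_smul hy0)).1 hy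

end Submodule

open Submodule

section Powers

variable {F} {A : Type*} [NonUnitalRing A] [Module F A]

lemma mul_mem_subPow_succ {J : Submodule F A} {k : ℕ} {a b : A}
    (ha : a ∈ subPow F J k) (hb : b ∈ J) : a * b ∈ subPow F J (k + 1) :=
  subset_span ⟨a, ha, b, hb, rfl⟩

lemma subPow_mono {J K : Submodule F A} (h : J ≤ K) (k : ℕ) : subPow F J k ≤ subPow F K k := by
  induction k with
  | zero => exact h
  | succ k ih =>
    refine span_le.2 ?_
    rintro _ ⟨a, ha, b, hb, rfl⟩
    exact mul_mem_subPow_succ (ih ha) (h hb)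

lemma subPow_add_succ_le [IsScalarTower F A A] (K : Submodule F A) (a b : ℕ) :
    subPow F K (a + b + 1) ≤
      span F {x | ∃ u ∈ subPow F K a, ∃ v ∈ subPow F K b, x = u * v} := by
  induction b with
  | zero => exact le_rfl
  | succ b ih =>
    refine span_le.2 ?_
    rintro _ ⟨y, hy, w, hw, rfl⟩
    refine mul_right_mem_of_mem_span (fun t ht => ?_) y (ih hy)
    obtain ⟨u, hu, v, hv, rfl⟩ := ht
    exact subset_span ⟨u, hu, v * w, mul_mem_subPow_succ hv hw, mul_assoc u v w⟩

/-- The ideal `I` absorbs every factor of a product that does not lie in `L`. -/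
lemma subPow_le_sup_subPow {I K L : Submodule F A} (hI : IsIdealSub F I) (hK : K ≤ I ⊔ L)
    (k : ℕ) : subPow F K k ≤ I ⊔ subPow F L k := by
  induction k with
  | zero => exact hK
  | succ k ih =>
    refine span_le.2 ?_
    rintro _ ⟨a, ha, b, hb, rfl⟩
    obtain ⟨i, hi, l, hl, rfl⟩ := mem_sup.1 (ih ha)
    obtain ⟨i', hi', l', hl', rfl⟩ := mem_sup.1 (hK hb)
    have hexp : (i + l) * (i' + l') = (i * (i' + l') + l * i') + l * l' := by noncomm_ring
    rw [hexp]
    exact add_mem (mem_sup_left (add_mem (hI _ i hi).2 (hI l i' hi').1))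
      (mem_sup_right (mul_mem_subPow_succ hl hl'))

lemma subPow_le_subPow_of_subPow_le [IsScalarTower F A A] {I K : Submodule F A} {n : ℕ}
    (h : subPow F K n ≤ I) (l : ℕ) : subPow F K (l * (n + 1) + n) ≤ subPow F I l := by
  induction l with
  | zero => rw [zero_mul, zero_add]; exact h
  | succ l ih =>
    have hidx : (l + 1) * (n + 1) + n = (l * (n + 1) + n) + n + 1 := by ring
    rw [hidx]
    refine (subPow_add_succ_le K _ n).trans (span_le.2 ?_)
    rintro _ ⟨u, hu, v, hv, rfl⟩
    exact mul_mem_subPow_succ (ih hu) (h hv)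

lemma IsNilpotentIdeal.sup [IsScalarTower F A A] {I J : Submodule F A} (hI : IsNilpotentIdeal F I)
    (hJ : IsNilpotentIdeal F J) : IsNilpotentIdeal F (I ⊔ J) := by
  obtain ⟨hIi, a, ha⟩ := hI
  obtain ⟨hJi, b, hb⟩ := hJ
  refine ⟨fun c x hx => ?_, ?_⟩
  · obtain ⟨i, hi, j, hj, rfl⟩ := mem_sup.1 hx
    rw [mul_add, add_mul]
    exact ⟨add_mem (mem_sup_left (hIi c i hi).1) (mem_sup_right (hJi c j hj).1),
      add_mem (mem_sup_left (hIi c i hi).2) (mem_sup_right (hJi c j hj).2)⟩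
  · have hbI : subPow F (I ⊔ J) b ≤ I := by
      simpa [hb] using subPow_le_sup_subPow (L := J) hIi le_rfl b
    exact ⟨a * (b + 1) + b, le_bot_iff.1 (ha ▸ subPow_le_subPow_of_subPow_le hbI a)⟩

lemma subPow_top_eq_top (hperf : span F {x : A | ∃ a b : A, x = a * b} = ⊤) (k : ℕ) :
    subPow F (⊤ : Submodule F A) k = ⊤ := by
  induction k with
  | zero => rfl
  | succ k ih => simpa [subPow, ih] using hperf

lemma IsIdealSub.eq_top_of_sup_eq_top {J N : Submodule F A} (hJ : IsIdealSub F J)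
    (hperf : span F {x : A | ∃ a b : A, x = a * b} = ⊤) (hJN : J ⊔ N = ⊤) {k : ℕ}
    (hN : subPow F N k = ⊥) : J = ⊤ := by
  simpa [subPow_top_eq_top hperf, hN] using subPow_le_sup_subPow hJ hJN.ge k

end Powers

section Radical

variable {F} {A : Type*} [NonUnitalRing A] [Module F A]

lemma isNilpotentIdeal_bot : IsNilpotentIdeal F (⊥ : Submodule F A) :=
  ⟨fun a x hx => by simp [(mem_bot F).1 hx], 0, rfl⟩

/-- Nilpotent ideals are closed under `⊔`, so a maximal one (it exists by finite dimensionality)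
is the largest. -/
lemma radSub_isNilpotentIdeal [IsScalarTower F A A] [FiniteDimensional F A] :
    IsNilpotentIdeal F (radSub F (A := A)) := by
  obtain ⟨K, hK⟩ := WellFoundedGT.exists_maximal inferInstance
    {J : Submodule F A | IsNilpotentIdeal F J} ⟨⊥, isNilpotentIdeal_bot⟩
  have hrad : radSub F (A := A) = K :=
    le_antisymm (sSup_le fun J hJ => le_sup_right.trans (hK.2 (hK.1.sup hJ) le_sup_left))
      (le_sSup hK.1)
  exact hrad ▸ hK.1

end Radical

section MatrixUnits

open Matrix

variable {F} {ι : Type*} [DecidableEq ι] {d : ι → Type*} [∀ i, Fintype (d i)]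
  [∀ i, DecidableEq (d i)]

lemma exists_single_mul_mul_single (z : ∀ i, d i) (s : ∀ i, Matrix (d i) (d i) F) (k i : ι) :
    ∃ a : F, Pi.single k (single (z k) (z k) 1) * s * Pi.single i (single (z i) (z i) 1) =
        a • Pi.single i (single (z i) (z i) 1) ∧
      Pi.single k (single (z k) (z k) 1) * s * Pi.single i (single (z i) (z i) 1) =
        a • Pi.single k (single (z k) (z k) 1) := by
  by_cases h : k = i
  · subst h
    have hcorner : Pi.single k (single (z k) (z k) 1) * s * Pi.single k (single (z k) (z k) 1) =
        s k (z k) (z k) • Pi.single k (single (z k) (z k) (1 : F)) := by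
      funext j
      by_cases hj : j = k
      · subst hj
        simp [single_mul_mul_single]
      · simp [hj]
    exact ⟨_, hcorner, hcorner⟩
  · have hzero : Pi.single k (single (z k) (z k) 1) * s *
        Pi.single i (single (z i) (z i) (1 : F)) = 0 := by
      funext j
      by_cases hj : j = k
      · subst hj
        simp [h]
      · simp [hj]
    exact ⟨0, by simp [hzero]⟩

lemma sum_pi_single_single_eq_one [Fintype ι] :
    ∑ c : Σ i, d i, Pi.single (M := fun i => Matrix (d i) (d i) F) c.1 (single c.2 c.2 1) = 1 := by
  rw [Fintype.sum_sigma]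
  calc (∑ i, ∑ p : d i, Pi.single i (single p p 1) : ∀ i, Matrix (d i) (d i) F)
      = ∑ i, Pi.single i 1 := by simp_rw [← AddMonoidHom.single_apply, ← map_sum, sum_single_one]
    _ = 1 := Finset.univ_sum_single _

end MatrixUnits

section Frame

/-- A system of matrix units `E^i_pq` of a non-unital algebra, recorded through
`diag i = E^i_00`, `col c = E^i_p0` and `row c = E^i_0p` for `c = (i, p)`; the sum
`∑ E^i_pp` is a two-sided identity. -/
structure MatrixFrame (R : Type*) [NonUnitalRing R] [Module F R] (ι κ : Type*) [Fintype κ] where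
  diag : ι → R
  block : κ → ι
  col : κ → R
  row : κ → R
  col_mul_diag : ∀ c, col c * diag (block c) = col c
  diag_mul_row : ∀ c, diag (block c) * row c = row c
  exists_diag_mul_mul_diag_right : ∀ (s : R) (k i : ι), ∃ a : F, diag k * s * diag i = a • diag i
  exists_diag_mul_mul_diag_left : ∀ (s : R) (k i : ι), ∃ a : F, diag k * s * diag i = a • diag k
  sum_mul : ∀ s : R, (∑ c, col c * row c) * s = s
  mul_sum : ∀ s : R, s * ∑ c, col c * row c = s

variable {F}

namespace MatrixFrame

section Matrix

open Matrix

variable {ι : Type*} [DecidableEq ι] {d : ι → Type*} [∀ i, Fintype (d i)] [∀ i, DecidableEq (d i)]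

def ofMatrix [Fintype ι] (z : ∀ i, d i) :
    MatrixFrame F (∀ i, Matrix (d i) (d i) F) ι (Σ i, d i) where
  diag i := Pi.single i (single (z i) (z i) 1)
  block := Sigma.fst
  col c := Pi.single c.1 (single c.2 (z c.1) 1)
  row c := Pi.single c.1 (single (z c.1) c.2 1)
  col_mul_diag c := by simp [← Pi.single_mul]
  diag_mul_row c := by simp [← Pi.single_mul]
  exists_diag_mul_mul_diag_right s k i :=
    (exists_single_mul_mul_single z s k i).imp fun _ h => h.1
  exists_diag_mul_mul_diag_left s k i :=
    (exists_single_mul_mul_single z s k i).imp fun _ h => h.2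
  sum_mul s := by simp [← Pi.single_mul, sum_pi_single_single_eq_one]
  mul_sum s := by simp [← Pi.single_mul, sum_pi_single_single_eq_one]

end Matrix

variable {R R' : Type*} [NonUnitalRing R] [Module F R] [NonUnitalRing R'] [Module F R']
  {ι κ : Type*} [Fintype κ]

noncomputable def comap (fr : MatrixFrame F R' ι κ) (φ : R →ₙₐ[F] R')
    (hφ : Function.Bijective φ) : MatrixFrame F R ι κ where
  diag i := Function.surjInv hφ.2 (fr.diag i)
  block := fr.block
  col c := Function.surjInv hφ.2 (fr.col c)
  row c := Function.surjInv hφ.2 (fr.row c)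
  col_mul_diag c := hφ.1 (by simp [Function.surjInv_eq, fr.col_mul_diag])
  diag_mul_row c := hφ.1 (by simp [Function.surjInv_eq, fr.diag_mul_row])
  exists_diag_mul_mul_diag_right s k i := by
    obtain ⟨a, ha⟩ := fr.exists_diag_mul_mul_diag_right (φ s) k i
    exact ⟨a, hφ.1 (by simp [Function.surjInv_eq, ha])⟩
  exists_diag_mul_mul_diag_left s k i := by
    obtain ⟨a, ha⟩ := fr.exists_diag_mul_mul_diag_left (φ s) k i
    exact ⟨a, hφ.1 (by simp [Function.surjInv_eq, ha])⟩
  sum_mul s := hφ.1 (by simp [Function.surjInv_eq, fr.sum_mul])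
  mul_sum s := hφ.1 (by simp [Function.surjInv_eq, fr.mul_sum])

def unit (fr : MatrixFrame F R ι κ) : R := ∑ c, fr.col c * fr.row c

end MatrixFrame

lemma IsMatrixSemisimple.exists_matrixFrame {R : Type*} [NonUnitalRing R] [Module F R]
    (h : IsMatrixSemisimple F R) :
    ∃ (ι κ : Type) (_ : Fintype κ), Nonempty (MatrixFrame F R ι κ) := by
  obtain ⟨m, n, hn, φ, hφ⟩ := h
  exact ⟨_, _, inferInstance,
    ⟨(MatrixFrame.ofMatrix (d := fun i => Fin (n i)) (fun i => ⟨0, hn i⟩)).comap φ hφ⟩⟩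

end Frame

section Idempotent

variable {F} {A : Type*} [NonUnitalRing A] [Module F A]

lemma isIdealSub_span_mul_mul [SMulCommClass F A A] [IsScalarTower F A A] (e : A) :
    IsIdealSub F (span F {x | ∃ a b : A, x = a * e * b}) := by
  intro c x hx
  constructor
  · refine mul_left_mem_of_mem_span (fun t ht => ?_) x hx
    obtain ⟨a, b, rfl⟩ := ht
    exact subset_span ⟨c * a, b, by simp only [mul_assoc]⟩
  · refine mul_right_mem_of_mem_span (fun t ht => ?_) x hx
    obtain ⟨a, b, rfl⟩ := ht
    exact subset_span ⟨a, b * c, by simp only [mul_assoc]⟩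

lemma span_mul_mul_sup_ker_mulLeft [SMulCommClass F A A] {e : A} (he : e * e = e) :
    span F {x | ∃ a b : A, x = a * e * b} ⊔ LinearMap.ker (LinearMap.mulLeft F e) = ⊤ := by
  refine eq_top_iff.2 fun a _ => mem_sup.2 ⟨e * a, subset_span ⟨e, a, by rw [he]⟩, a - e * a, ?_,
    add_sub_cancel _ _⟩
  simp [mul_sub, ← mul_assoc, he]

/-- If `e (s + r) = 0` then `s = e s = -(e r) ∈ R`. -/
lemma ker_mulLeft_le_of_isCompl [SMulCommClass F A A] {S R : Submodule F A} (hSR : IsCompl S R)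
    {e : A} (he : ∀ s ∈ S, e * s = s) (hR : ∀ r ∈ R, e * r ∈ R) :
    LinearMap.ker (LinearMap.mulLeft F e) ≤ R := by
  intro p hp
  obtain ⟨s, hs, r, hr, rfl⟩ := mem_sup.1 (hSR.codisjoint.eq_top ▸ mem_top : p ∈ S ⊔ R)
  have hsum : s + e * r = 0 := by
    simpa [mul_add, he s hs] using (LinearMap.mem_ker.1 hp)
  have hs0 : s = 0 :=
    disjoint_def.1 hSR.disjoint s hs (eq_neg_of_add_eq_zero_left hsum ▸ neg_mem (hR r hr))
  simpa [hs0] using hr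

end Idempotent

section SimpleBimods

variable {F} {A : Type*} [NonUnitalRing A] [Module F A] {S : NonUnitalSubalgebra F A}

lemma isSubBimod_span_s10 [SMulCommClass F A A] [IsScalarTower F A A] {T : Set A}
    (h : ∀ s ∈ S, ∀ t ∈ T, s * t ∈ span F T ∧ t * s ∈ span F T) :
    IsSubBimod F S (span F T) :=
  fun s hs w hw => ⟨mul_left_mem_of_mem_span (fun t ht => (h s hs t ht).1) w hw,
    mul_right_mem_of_mem_span (fun t ht => (h s hs t ht).2) w hw⟩

lemma mem_simpleBimods_of_generator {W : Submodule F A} {x : A} (hW : IsSubBimod F S W)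
    (hx : x ∈ W) (hnt : ∃ s ∈ S, s * x ≠ 0 ∨ x * s ≠ 0)
    (hgen : ∀ W', IsSubBimod F S W' → x ∈ W' → W ≤ W')
    (hrec : ∀ w ∈ W, w ≠ 0 → ∀ W', IsSubBimod F S W' → w ∈ W' → x ∈ W') :
    W ∈ SimpleBimods F S Set.univ := by
  obtain ⟨s, hs, hsx⟩ := hnt
  refine ⟨Set.subset_univ _, ?_, hW, ⟨s, hs, x, hx, hsx⟩, fun W' hle hW' => ?_⟩
  · rintro rfl
    simp [(mem_bot F).1 hx] at hsx
  · refine or_iff_not_imp_left.2 fun hW'0 => le_antisymm hle (hgen W' hW' ?_)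
    obtain ⟨w, hw, hw0⟩ := exists_mem_ne_zero_of_ne_bot hW'0
    exact hrec w (hle hw) hw0 W' hW' hw

lemma mem_modGenSubalg_of_mem [SMulCommClass F A A] [IsScalarTower F A A] {B : Set A}
    {W : Submodule F A} (hW : W ∈ SimpleBimods F S B) {x : A} (hx : x ∈ W) :
    x ∈ modGenSubalg F S B :=
  NonUnitalAlgebra.subset_adjoin F (Set.mem_biUnion hW hx)

end SimpleBimods

lemma exists_mul_ne_zero_of_sum_mul_eq {R : Type*} [NonUnitalRing R] {κ : Type*} [Fintype κ]
    (u v : κ → R) {w : R} (h : (∑ c, u c * v c) * w = w) (hw : w ≠ 0) : ∃ c, v c * w ≠ 0 := by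
  by_contra! hv
  exact hw (by rw [← h, Finset.sum_mul]; simp [mul_assoc, hv])

lemma exists_mul_ne_zero_of_mul_sum_eq {R : Type*} [NonUnitalRing R] {κ : Type*} [Fintype κ]
    (u v : κ → R) {w : R} (h : w * ∑ c, u c * v c = w) (hw : w ≠ 0) : ∃ c, w * u c ≠ 0 := by
  by_contra! hu
  exact hw (by rw [← h, Finset.mul_sum]; simp [← mul_assoc, hu])

namespace MatrixFrame

variable {F} {A : Type*} [NonUnitalRing A] [Module F A] {S : NonUnitalSubalgebra F A}
  {ι κ : Type*} [Fintype κ] (fr : MatrixFrame F S ι κ)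

lemma coe_unit_mul {s : A} (hs : s ∈ S) : (fr.unit : A) * s = s :=
  congrArg Subtype.val (fr.sum_mul ⟨s, hs⟩)

lemma mul_coe_unit {s : A} (hs : s ∈ S) : s * (fr.unit : A) = s :=
  congrArg Subtype.val (fr.mul_sum ⟨s, hs⟩)

lemma coe_unit : (fr.unit : A) = ∑ c, (fr.col c : A) * fr.row c := by
  simp [unit]

lemma coe_col_mul_diag (c : κ) : (fr.col c : A) * fr.diag (fr.block c) = fr.col c :=
  congrArg Subtype.val (fr.col_mul_diag c)

lemma coe_diag_mul_row (c : κ) : (fr.diag (fr.block c) : A) * fr.row c = fr.row c :=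
  congrArg Subtype.val (fr.diag_mul_row c)

lemma exists_coe_diag_mul_mul_diag_right {s : A} (hs : s ∈ S) (k i : ι) :
    ∃ a : F, (fr.diag k : A) * s * fr.diag i = a • (fr.diag i : A) :=
  (fr.exists_diag_mul_mul_diag_right ⟨s, hs⟩ k i).imp fun _ h => congrArg Subtype.val h

lemma exists_coe_diag_mul_mul_diag_left {s : A} (hs : s ∈ S) (k i : ι) :
    ∃ a : F, (fr.diag k : A) * s * fr.diag i = a • (fr.diag k : A) :=
  (fr.exists_diag_mul_mul_diag_left ⟨s, hs⟩ k i).imp fun _ h => congrArg Subtype.val h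

lemma coe_unit_mul_eq_sum (y : A) : (fr.unit : A) * y = ∑ c, (fr.col c : A) * (fr.row c * y) := by
  simp [fr.coe_unit, Finset.sum_mul, mul_assoc]

lemma mul_coe_unit_eq_sum (y : A) : y * fr.unit = ∑ c, (y * fr.col c : A) * fr.row c := by
  simp [fr.coe_unit, Finset.mul_sum, mul_assoc]

variable [SMulCommClass F A A] [IsScalarTower F A A]

lemma mul_mem_modGenSubalg_of_mul_unit_eq_zero {i : ι} {x : A} (hx : (fr.diag i : A) * x = x)
    (hxe : x * fr.unit = 0) {s : A} (hs : s ∈ S) : s * x ∈ modGenSubalg F S Set.univ := by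
  rcases eq_or_ne x 0 with rfl | hx0
  · simp [zero_mem]
  have hxS : ∀ t ∈ S, x * t = 0 := fun t ht => by
    rw [← fr.coe_unit_mul ht, ← mul_assoc, hxe, zero_mul]
  set T := {y : A | ∃ s ∈ S, y = s * x}
  have hrow : ∀ c, ∀ y ∈ span F T, (fr.row c : A) * y ∈ F ∙ x := fun c =>
    mul_left_mem_of_mem_span fun y ⟨s, hs, hy⟩ => by
      obtain ⟨a, ha⟩ :=
        fr.exists_coe_diag_mul_mul_diag_right (mul_mem (fr.row c).2 hs) (fr.block c) i
      refine mem_span_singleton.2 ⟨a, ?_⟩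
      calc a • x = (fr.diag (fr.block c) * (fr.row c * s) * fr.diag i : A) * x := by
            rw [ha, smul_mul_assoc, hx]
        _ = (fr.diag (fr.block c) * fr.row c : A) * s * (fr.diag i * x) := by
            simp only [mul_assoc]
        _ = fr.row c * y := by rw [coe_diag_mul_row, hx, hy, mul_assoc]
  have hunit : ∀ y ∈ span F T, (fr.unit : A) * y = y :=
    mul_eq_self_of_mem_span fun _ ⟨s, hs, hy⟩ => by rw [hy, ← mul_assoc, fr.coe_unit_mul hs]
  refine mem_modGenSubalg_of_mem (W := span F T)
    (mem_simpleBimods_of_generator (x := x) ?_ ?_ ?_ ?_ ?_) (subset_span ⟨s, hs, rfl⟩)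
  · refine isSubBimod_span_s10 fun s hs y hyT => ?_
    obtain ⟨s', hs', hy⟩ := hyT
    constructor
    · exact subset_span ⟨s * s', mul_mem hs hs', by rw [hy, mul_assoc]⟩
    · rw [hy, mul_assoc, hxS s hs, mul_zero]
      exact zero_mem _
  · exact subset_span ⟨_, (fr.diag i).2, hx.symm⟩
  · refine ⟨fr.unit, fr.unit.2, Or.inl ?_⟩
    rwa [← hx, ← mul_assoc, fr.coe_unit_mul (fr.diag i).2, hx]
  · exact fun W' hW' hxW' => span_le.2 fun _ ⟨s, hs, hy⟩ => hy ▸ (hW' s hs x hxW').1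
  · intro w hw hw0 W' hW' hwW'
    obtain ⟨c, hc⟩ := exists_mul_ne_zero_of_sum_mul_eq (fun c => (fr.col c : A))
      (fun c => (fr.row c : A)) (by rw [← fr.coe_unit]; exact hunit w hw) hw0
    exact mem_of_mem_of_mem_span_singleton (hW' _ (fr.row c).2 w hwW').1 (hrow c w hw) hc

lemma mul_mem_modGenSubalg_of_unit_mul_eq_zero {j : ι} {x : A} (hx : x * fr.diag j = x)
    (hex : fr.unit * x = 0) {t : A} (ht : t ∈ S) : x * t ∈ modGenSubalg F S Set.univ := by
  rcases eq_or_ne x 0 with rfl | hx0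
  · simp [zero_mem]
  have hSx : ∀ s ∈ S, s * x = 0 := fun s hs => by
    rw [← fr.mul_coe_unit hs, mul_assoc, hex, mul_zero]
  set T := {y : A | ∃ t ∈ S, y = x * t}
  have hcol : ∀ b, ∀ y ∈ span F T, y * fr.col b ∈ F ∙ x := fun b =>
    mul_right_mem_of_mem_span fun y ⟨t, ht, hy⟩ => by
      obtain ⟨a, ha⟩ :=
        fr.exists_coe_diag_mul_mul_diag_left (mul_mem ht (fr.col b).2) j (fr.block b)
      refine mem_span_singleton.2 ⟨a, ?_⟩
      calc a • x = x * (fr.diag j * (t * fr.col b) * fr.diag (fr.block b) : A) := by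
            rw [ha, mul_smul_comm, hx]
        _ = (x * fr.diag j) * t * (fr.col b * fr.diag (fr.block b) : A) := by
            simp only [mul_assoc]
        _ = y * fr.col b := by rw [coe_col_mul_diag, hx, hy, mul_assoc]
  have hunit : ∀ y ∈ span F T, y * (fr.unit : A) = y :=
    mul_eq_self_of_mem_span' fun _ ⟨t, ht, hy⟩ => by rw [hy, mul_assoc, fr.mul_coe_unit ht]
  refine mem_modGenSubalg_of_mem (W := span F T)
    (mem_simpleBimods_of_generator (x := x) ?_ ?_ ?_ ?_ ?_) (subset_span ⟨t, ht, rfl⟩)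
  · refine isSubBimod_span_s10 fun s hs y hyT => ?_
    obtain ⟨t', ht', hy⟩ := hyT
    constructor
    · rw [hy, ← mul_assoc, hSx s hs, zero_mul]
      exact zero_mem _
    · exact subset_span ⟨t' * s, mul_mem ht' hs, by rw [hy, mul_assoc]⟩
  · exact subset_span ⟨_, (fr.diag j).2, hx.symm⟩
  · refine ⟨fr.unit, fr.unit.2, Or.inr ?_⟩
    rwa [← hx, mul_assoc, fr.mul_coe_unit (fr.diag j).2, hx]
  · exact fun W' hW' hxW' => span_le.2 fun _ ⟨t, ht, hy⟩ => hy ▸ (hW' t ht x hxW').2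
  · intro w hw hw0 W' hW' hwW'
    obtain ⟨b, hb⟩ := exists_mul_ne_zero_of_mul_sum_eq (fun c => (fr.col c : A))
      (fun c => (fr.row c : A)) (by rw [← fr.coe_unit]; exact hunit w hw) hw0
    exact mem_of_mem_of_mem_span_singleton (hW' _ (fr.col b).2 w hwW').2 (hcol b w hw) hb

lemma mul_mul_mem_modGenSubalg_of_corner {i j : ι} {x : A}
    (hx : (fr.diag i : A) * x * fr.diag j = x) {s t : A} (hs : s ∈ S) (ht : t ∈ S) :
    s * x * t ∈ modGenSubalg F S Set.univ := by
  rcases eq_or_ne x 0 with rfl | hx0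
  · simp [zero_mem]
  set T := {y : A | ∃ s ∈ S, ∃ t ∈ S, y = s * x * t}
  have hcorner : ∀ c b, ∀ y ∈ span F T, (fr.row c : A) * y * fr.col b ∈ F ∙ x := fun c b =>
    mul_mul_mem_of_mem_span fun y ⟨s, hs, t, ht, hy⟩ => by
      obtain ⟨a, ha⟩ :=
        fr.exists_coe_diag_mul_mul_diag_right (mul_mem (fr.row c).2 hs) (fr.block c) i
      obtain ⟨a', ha'⟩ :=
        fr.exists_coe_diag_mul_mul_diag_left (mul_mem ht (fr.col b).2) j (fr.block b)
      refine mem_span_singleton.2 ⟨a * a', ?_⟩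
      calc (a * a') • x = (fr.diag (fr.block c) * (fr.row c * s) * fr.diag i : A) * x *
            (fr.diag j * (t * fr.col b) * fr.diag (fr.block b)) := by
            rw [ha, ha', smul_mul_assoc, smul_mul_assoc, mul_smul_comm, smul_smul, hx]
        _ = (fr.diag (fr.block c) * fr.row c : A) * s * (fr.diag i * x * fr.diag j) * t *
            (fr.col b * fr.diag (fr.block b)) := by
            simp only [mul_assoc]
        _ = fr.row c * y * fr.col b := by
            rw [coe_diag_mul_row, hx, coe_col_mul_diag, hy]
            simp only [mul_assoc]
  have hunit : ∀ y ∈ span F T, (fr.unit : A) * y = y :=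
    mul_eq_self_of_mem_span fun _ ⟨s, hs, t, _, hy⟩ => by
      rw [hy, ← mul_assoc, ← mul_assoc, fr.coe_unit_mul hs]
  have hunit' : ∀ y ∈ span F T, y * (fr.unit : A) = y :=
    mul_eq_self_of_mem_span' fun _ ⟨_, _, t, ht, hy⟩ => by rw [hy, mul_assoc, fr.mul_coe_unit ht]
  refine mem_modGenSubalg_of_mem (W := span F T)
    (mem_simpleBimods_of_generator (x := x) ?_ ?_ ?_ ?_ ?_) (subset_span ⟨s, hs, t, ht, rfl⟩)
  · refine isSubBimod_span_s10 fun s' hs' y hyT => ?_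
    obtain ⟨s, hs, t, ht, rfl⟩ := hyT
    exact ⟨subset_span ⟨s' * s, mul_mem hs' hs, t, ht, by simp only [mul_assoc]⟩,
      subset_span ⟨s, hs, t * s', mul_mem ht hs', by simp only [mul_assoc]⟩⟩
  · exact subset_span ⟨_, (fr.diag i).2, _, (fr.diag j).2, hx.symm⟩
  · refine ⟨fr.unit, fr.unit.2, Or.inl ?_⟩
    rwa [← hx, ← mul_assoc, ← mul_assoc, fr.coe_unit_mul (fr.diag i).2, hx]
  · exact fun W' hW' hxW' => span_le.2 fun _ ⟨s, hs, t, ht, hy⟩ =>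
      hy ▸ (hW' t ht _ (hW' s hs x hxW').1).2
  · intro w hw hw0 W' hW' hwW'
    obtain ⟨c, hc⟩ := exists_mul_ne_zero_of_sum_mul_eq (fun c => (fr.col c : A))
      (fun c => (fr.row c : A)) (by rw [← fr.coe_unit]; exact hunit w hw) hw0
    obtain ⟨b, hb⟩ := exists_mul_ne_zero_of_mul_sum_eq (fun c => (fr.col c : A))
      (fun c => (fr.row c : A)) (by rw [← fr.coe_unit, mul_assoc, hunit' w hw]) hc
    exact mem_of_mem_of_mem_span_singleton
      (hW' _ (fr.col b).2 _ (hW' _ (fr.row c).2 w hwW').1).2 (hcorner c b w hw) hb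

lemma coe_unit_mul_mul_coe_unit_mem (a : A) :
    (fr.unit : A) * a * fr.unit ∈ modGenSubalg F S Set.univ := by
  rw [fr.coe_unit, Finset.mul_sum]
  refine sum_mem fun b _ => ?_
  rw [Finset.sum_mul, Finset.sum_mul]
  refine sum_mem fun c _ => ?_
  have hcorner : (fr.diag (fr.block c) : A) * (fr.row c * a * fr.col b) * fr.diag (fr.block b) =
      fr.row c * a * fr.col b := by
    calc _ = (fr.diag (fr.block c) * fr.row c : A) * a * (fr.col b * fr.diag (fr.block b)) := by
          simp only [mul_assoc]
      _ = _ := by rw [coe_diag_mul_row, coe_col_mul_diag]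
  have hx := fr.mul_mul_mem_modGenSubalg_of_corner hcorner (fr.col c).2 (fr.row b).2
  simpa only [mul_assoc] using hx

lemma coe_unit_mul_mem (a : A) : (fr.unit : A) * a ∈ modGenSubalg F S Set.univ := by
  have he : (fr.unit : A) * fr.unit = fr.unit := fr.coe_unit_mul fr.unit.2
  have hsplit : (fr.unit : A) * a = fr.unit * (a - a * fr.unit) + fr.unit * a * fr.unit := by
    noncomm_ring
  rw [hsplit, coe_unit_mul_eq_sum]
  refine add_mem (sum_mem fun c _ => ?_) (fr.coe_unit_mul_mul_coe_unit_mem a)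
  refine fr.mul_mem_modGenSubalg_of_mul_unit_eq_zero (i := fr.block c) ?_ ?_ (fr.col c).2
  · rw [← mul_assoc, coe_diag_mul_row]
  · rw [mul_assoc, sub_mul, mul_assoc, he, sub_self, mul_zero]

lemma mul_coe_unit_mem (a : A) : a * fr.unit ∈ modGenSubalg F S Set.univ := by
  have he : (fr.unit : A) * fr.unit = fr.unit := fr.coe_unit_mul fr.unit.2
  have hsplit : a * fr.unit = (a - fr.unit * a) * fr.unit + fr.unit * a * fr.unit := by
    noncomm_ring
  rw [hsplit, mul_coe_unit_eq_sum]
  refine add_mem (sum_mem fun b _ => ?_) (fr.coe_unit_mul_mul_coe_unit_mem a)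
  refine fr.mul_mem_modGenSubalg_of_unit_mul_eq_zero (j := fr.block b) ?_ ?_ (fr.row b).2
  · rw [mul_assoc, coe_col_mul_diag]
  · rw [← mul_assoc, mul_sub, ← mul_assoc, he, sub_self, zero_mul]

end MatrixFrame

theorem perfect_implies_modGenerated
    [FiniteDimensional F A]
    -- `A` is perfect: the span of all products `xy` is `A`
    (hA_perf : Submodule.span F {x : A | ∃ a b : A, x = a * b} = ⊤)
    -- `S` is a Levi subalgebra: semisimple, with `A = S ⊕ rad A` as `F`-vector spaces
    (S : NonUnitalSubalgebra F A) (hS_ss : IsMatrixSemisimple F S)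
    (hLevi : IsCompl (NonUnitalSubalgebra.toSubmodule S) (radSub F (A := A))) :
    modGenSubalg F S (Set.univ : Set A) = ⊤ := by
  obtain ⟨ι, κ, _, ⟨fr⟩⟩ := hS_ss.exists_matrixFrame
  set e : A := (fr.unit : A)
  have he : e * e = e := fr.coe_unit_mul fr.unit.2
  obtain ⟨hrad, k, hk⟩ := radSub_isNilpotentIdeal (F := F) (A := A)
  have hker : LinearMap.ker (LinearMap.mulLeft F e) ≤ radSub F :=
    ker_mulLeft_le_of_isCompl hLevi (fun s hs => fr.coe_unit_mul hs) fun r hr => (hrad e r hr).1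
  have hideal : span F {x | ∃ a b : A, x = a * e * b} = ⊤ :=
    (isIdealSub_span_mul_mul e).eq_top_of_sup_eq_top hA_perf (span_mul_mul_sup_ker_mulLeft he)
      (le_bot_iff.1 (hk ▸ subPow_mono hker k))
  have hle : span F {x | ∃ a b : A, x = a * e * b} ≤ (modGenSubalg F S Set.univ).toSubmodule := by
    refine span_le.2 fun _ ⟨a, b, hx⟩ => ?_
    have hsplit : a * e * b = (a * e) * (e * b) := by rw [← mul_assoc (a * e), mul_assoc a e e, he]
    rw [hx, SetLike.mem_coe, NonUnitalSubalgebra.mem_toSubmodule, hsplit]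
    exact mul_mem (fr.mul_coe_unit_mem a) (fr.coe_unit_mul_mem b)
  exact eq_top_iff.2 fun x _ => hle (hideal ▸ mem_top)
end

section
/- In the matrix-decomposition setting below, the Lie algebra L is perfect: [L, L] = L. -/
/-!
Since `L` is generated by the blocks `V'_ij ⊗ Λ(i,j)`, it suffices to write every generator as a
sum of commutators of generators. For `i ≠ j` write `E_pq = E_pk E_kq` with `k ≠ q` (or `k ≠ p`):
then `E_pq ⊗ λ = [E_pk ⊗ λ, E_kq ⊗ 1_j]` if `j ∈ I` and `E_pq ⊗ λ = [E_pk ⊗ 1_i, E_kq ⊗ λ]` if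
`i ∈ I`, the reversed products vanishing because `i ≠ j`. On a diagonal block
`[X ⊗ 1_i, Y ⊗ λ] = [X, Y] ⊗ λ`, so it remains that `sl_n` is spanned by its commutators, which
holds for `n ≥ 2` when `2 ≠ 0` and for `n ≥ 3` in every characteristic.
-/

open scoped TensorProduct DirectSum

universe u v w

variable (F : Type u) [Field F] [IsAlgClosed F]
  {I : Type} [Fintype I] [DecidableEq I] [Nonempty I] {n : I → ℕ}
  {Λ : Option I → Option I → Type v}
  [∀ i j, AddCommGroup (Λ i j)] [∀ i j, Module F (Λ i j)]
  {A : Type w} [NonUnitalRing A] [Module F A] [SMulCommClass F A A] [IsScalarTower F A A]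

/-- The image in `A` of an element `u ∈ V_ij ⊗ Λ(i,j)` under the identification `ψ`
of `A` with `⊕_{i,j ∈ Î} V_ij ⊗ Λ(i,j)`. -/
noncomputable def emb (ψ : (⨁ p : Option I × Option I,
      Matrix (Fin (nopt n p.1)) (Fin (nopt n p.2)) F ⊗[F] Λ p.1 p.2) ≃ₗ[F] A)
    (p : Option I × Option I)
    (u : Matrix (Fin (nopt n p.1)) (Fin (nopt n p.2)) F ⊗[F] Λ p.1 p.2) : A :=
  ψ (DirectSum.lof F (Option I × Option I)
    (fun q => Matrix (Fin (nopt n q.1)) (Fin (nopt n q.2)) F ⊗[F] Λ q.1 q.2) p u)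

/-- The image in `A` of a pure tensor `X ⊗ a ∈ V_ij ⊗ Λ(i,j)`. -/
noncomputable def elt (ψ : (⨁ p : Option I × Option I,
      Matrix (Fin (nopt n p.1)) (Fin (nopt n p.2)) F ⊗[F] Λ p.1 p.2) ≃ₗ[F] A)
    (i j : Option I) (X : Matrix (Fin (nopt n i)) (Fin (nopt n j)) F) (a : Λ i j) : A :=
  emb F ψ (i, j) (X ⊗ₜ a)

/-- The union of the subspaces `V'_ij ⊗ Λ(i,j)`, `(i,j) ≠ (0,0)`, where `V'_ii` consists
of the trace-zero matrices and `V'_ij = V_ij` for `i ≠ j`. -/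
def lieGens (ψ : (⨁ p : Option I × Option I,
      Matrix (Fin (nopt n p.1)) (Fin (nopt n p.2)) F ⊗[F] Λ p.1 p.2) ≃ₗ[F] A) : Set A :=
  {x | ∃ (i j : Option I) (X : Matrix (Fin (nopt n i)) (Fin (nopt n j)) F) (a : Λ i j),
      i ≠ j ∧ x = elt F ψ i j X a} ∪
  {x | ∃ (i : I) (X : Matrix (Fin (n i)) (Fin (n i)) F) (a : Λ (some i) (some i)),
      Matrix.trace X = 0 ∧ x = elt F ψ (some i) (some i) X a}

/-- `L`: the Lie subalgebra of `A` (as a subspace closed under commutators) generated by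
the subspaces `V'_ij ⊗ Λ(i,j)` over all `(i,j) ≠ (0,0)`. -/
def Lsub (ψ : (⨁ p : Option I × Option I,
      Matrix (Fin (nopt n p.1)) (Fin (nopt n p.2)) F ⊗[F] Λ p.1 p.2) ≃ₗ[F] A) :
    Submodule F A :=
  sInf {J : Submodule F A | lieGens F ψ ⊆ J ∧ ∀ x ∈ J, ∀ y ∈ J, x * y - y * x ∈ J}

variable (mu : ∀ i j k : Option I, Λ i j →ₗ[F] Λ j k →ₗ[F] Λ i k)
  (ψ : (⨁ p : Option I × Option I,
      Matrix (Fin (nopt n p.1)) (Fin (nopt n p.2)) F ⊗[F] Λ p.1 p.2) ≃ₗ[F] A)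

section LieClosure

variable (R : Type*) {M : Type*} [Semiring R] [NonUnitalRing M] [Module R M]

def lieClosure (s : Set M) : Submodule R M :=
  sInf {J : Submodule R M | s ⊆ J ∧ ∀ x ∈ J, ∀ y ∈ J, x * y - y * x ∈ J}

def commutatorSpan (s : Set M) : Submodule R M :=
  Submodule.span R {z | ∃ x ∈ s, ∃ y ∈ s, z = x * y - y * x}

variable {R}

theorem subset_lieClosure (s : Set M) : s ⊆ lieClosure R s :=
  fun _ hx => Submodule.mem_sInf.2 fun _ hJ => hJ.1 hx

theorem commutator_mem_lieClosure {s : Set M} {x y : M} (hx : x ∈ lieClosure R s)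
    (hy : y ∈ lieClosure R s) : x * y - y * x ∈ lieClosure R s :=
  Submodule.mem_sInf.2 fun J hJ =>
    hJ.2 x (Submodule.mem_sInf.1 hx J hJ) y (Submodule.mem_sInf.1 hy J hJ)

theorem commutatorSpan_mono {s t : Set M} (h : s ⊆ t) :
    commutatorSpan R s ≤ commutatorSpan R t :=
  Submodule.span_mono fun _ ⟨x, hx, y, hy, hz⟩ => ⟨x, h hx, y, h hy, hz⟩

theorem commutatorSpan_lieClosure_eq {s : Set M} (hs : s ⊆ commutatorSpan R s) :
    commutatorSpan R (lieClosure R s : Set M) = lieClosure R s := by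
  have hle : commutatorSpan R (lieClosure R s : Set M) ≤ lieClosure R s :=
    Submodule.span_le.2 fun _ ⟨x, hx, y, hy, hz⟩ => hz ▸ commutator_mem_lieClosure hx hy
  refine le_antisymm hle (sInf_le ⟨hs.trans (commutatorSpan_mono (subset_lieClosure s)), ?_⟩)
  exact fun x hx y hy => Submodule.subset_span ⟨x, hle hx, y, hle hy, rfl⟩

end LieClosure

namespace Matrix

variable {ι κ R : Type*} [Fintype ι] [DecidableEq ι] [Fintype κ] [DecidableEq κ]

theorem mem_span_mul_traceZero [Semiring R] (hι : 1 < Fintype.card ι) (X : Matrix κ ι R) :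
    X ∈ Submodule.span R
      {Z | ∃ (X' : Matrix κ ι R) (Y : Matrix ι ι R), Y.trace = 0 ∧ Z = X' * Y} := by
  induction X using Matrix.induction_on' with
  | h_zero => exact zero_mem _
  | h_add _ _ h₁ h₂ => exact add_mem h₁ h₂
  | h_std_basis p q c =>
    obtain ⟨k, hk⟩ := Fintype.exists_ne_of_one_lt_card hι q
    exact Submodule.subset_span ⟨single p k c, single k q 1, trace_single_eq_of_ne _ _ _ hk,
      by rw [single_mul_single_same, mul_one]⟩

theorem mem_span_traceZero_mul [Semiring R] (hι : 1 < Fintype.card ι) (X : Matrix ι κ R) :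
    X ∈ Submodule.span R
      {Z | ∃ (Y : Matrix ι ι R) (X' : Matrix ι κ R), Y.trace = 0 ∧ Z = Y * X'} := by
  induction X using Matrix.induction_on' with
  | h_zero => exact zero_mem _
  | h_add _ _ h₁ h₂ => exact add_mem h₁ h₂
  | h_std_basis p q c =>
    obtain ⟨k, hk⟩ := Fintype.exists_ne_of_one_lt_card hι p
    exact Submodule.subset_span ⟨single p k 1, single k q c, trace_single_eq_of_ne _ _ _ hk.symm,
      by rw [single_mul_single_same, one_mul]⟩

theorem mem_of_trace_eq_zero_of_single_mem [AddCommGroup R] (P : AddSubgroup (Matrix ι ι R))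
    (z : ι) (hoff : ∀ k l c, k ≠ l → single k l c ∈ P)
    (hdiag : ∀ k c, single k k c - single z z c ∈ P)
    {X : Matrix ι ι R} (hX : X.trace = 0) : X ∈ P := by
  suffices ∀ Y : Matrix ι ι R, Y - single z z Y.trace ∈ P by simpa [hX] using this X
  intro Y
  induction Y using Matrix.induction_on' with
  | h_zero => simp
  | h_add Y₁ Y₂ h₁ h₂ => simpa [trace_add, single_add, add_sub_add_comm] using add_mem h₁ h₂
  | h_std_basis k l c =>
    obtain rfl | hkl := eq_or_ne k l
    · simpa using hdiag k c
    · simpa [hkl] using hoff k l c hkl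

theorem mem_span_commutators_of_trace_eq_zero [Field R] (h2 : 2 ≤ Fintype.card ι)
    (h3 : ringChar R = 2 → 3 ≤ Fintype.card ι) {X : Matrix ι ι R} (hX : X.trace = 0) :
    X ∈ Submodule.span R
      {Z | ∃ X Y : Matrix ι ι R, X.trace = 0 ∧ Y.trace = 0 ∧ Z = X * Y - Y * X} := by
  set C := Submodule.span R
    {Z | ∃ X Y : Matrix ι ι R, X.trace = 0 ∧ Y.trace = 0 ∧ Z = X * Y - Y * X}
  have hC (X Y : Matrix ι ι R) (hX : X.trace = 0) (hY : Y.trace = 0) : X * Y - Y * X ∈ C :=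
    Submodule.subset_span ⟨X, Y, hX, hY, rfl⟩
  obtain ⟨z⟩ : Nonempty ι := Fintype.card_pos_iff.1 (by omega)
  refine mem_of_trace_eq_zero_of_single_mem C.toAddSubgroup z (fun k l c hkl => ?_)
    (fun k c => ?_) hX
  · by_cases hR : ringChar R = 2
    -- `[E_km, E_ml] = E_kl` for a third index `m`
    · obtain ⟨m, hmk, hml⟩ := ENat.exists_ne_ne_of_three_le
        (by simpa [ENat.card_eq_coe_fintype_card] using h3 hR) k l
      simpa [single_mul_single_same, single_mul_single_of_ne _ _ _ _ hkl.symm] using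
        hC (single k m 1) (single m l c) (trace_single_eq_of_ne _ _ _ hmk.symm)
          (trace_single_eq_of_ne _ _ _ hml)
    -- `[E_kk - E_ll, E_kl] = 2 E_kl`
    · have hH : (single k k (1 : R) - single l l 1).trace = 0 := by simp [trace_sub]
      have := C.smul_mem (2⁻¹ : R) (hC _ (single k l c) hH (trace_single_eq_of_ne _ _ _ hkl))
      simp only [sub_mul, mul_sub, single_mul_single_same, one_mul, mul_one,
        single_mul_single_of_ne _ _ _ _ hkl.symm, sub_zero, zero_sub, sub_neg_eq_add] at this
      rwa [← two_smul R, smul_smul, inv_mul_cancel₀ (Ring.two_ne_zero hR), one_smul] at this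
  · obtain rfl | hkz := eq_or_ne k z
    · simp
    -- `[E_kz, E_zk] = E_kk - E_zz`
    · simpa [single_mul_single_same] using
        hC (single k z c) (single z k 1) (trace_single_eq_of_ne _ _ _ hkz)
          (trace_single_eq_of_ne _ _ _ hkz.symm)

end Matrix

section Blocks

omit [IsAlgClosed F] [Fintype I] [Nonempty I] [SMulCommClass F A A] [IsScalarTower F A A]

noncomputable def eltLinearMap (i j : Option I) (a : Λ i j) :
    Matrix (Fin (nopt n i)) (Fin (nopt n j)) F →ₗ[F] A :=
  ψ.toLinearMap ∘ₗ DirectSum.lof F (Option I × Option I)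
    (fun q => Matrix (Fin (nopt n q.1)) (Fin (nopt n q.2)) F ⊗[F] Λ q.1 q.2) (i, j) ∘ₗ
    (TensorProduct.mk F _ _).flip a

theorem eltLinearMap_apply (i j : Option I) (a : Λ i j)
    (X : Matrix (Fin (nopt n i)) (Fin (nopt n j)) F) :
    eltLinearMap F ψ i j a X = elt F ψ i j X a :=
  rfl

theorem elt_mem_of_mem_span {i j : Option I} {a : Λ i j} (C : Submodule F A)
    {s : Set (Matrix (Fin (nopt n i)) (Fin (nopt n j)) F)} (hs : ∀ Y ∈ s, elt F ψ i j Y a ∈ C)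
    {X : Matrix (Fin (nopt n i)) (Fin (nopt n j)) F} (hX : X ∈ Submodule.span F s) :
    elt F ψ i j X a ∈ C :=
  Submodule.span_le (p := C.comap (eltLinearMap F ψ i j a)) |>.2 hs hX

theorem Lsub_eq_lieClosure : Lsub F ψ = lieClosure F (lieGens F ψ) :=
  rfl

theorem elt_mem_lieGens_of_ne {i j : Option I} (hij : i ≠ j)
    (X : Matrix (Fin (nopt n i)) (Fin (nopt n j)) F) (a : Λ i j) :
    elt F ψ i j X a ∈ lieGens F ψ :=
  Or.inl ⟨i, j, X, a, hij, rfl⟩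

theorem elt_mem_lieGens_of_trace_eq_zero {i : I} {X : Matrix (Fin (n i)) (Fin (n i)) F}
    (hX : X.trace = 0) (a : Λ (some i) (some i)) :
    elt F ψ (some i) (some i) X a ∈ lieGens F ψ :=
  Or.inr ⟨i, X, a, hX, rfl⟩

theorem commutator_elt_of_ne
    (hmul : ∀ (i j k : Option I) (X : Matrix (Fin (nopt n i)) (Fin (nopt n j)) F)
      (a : Λ i j) (Y : Matrix (Fin (nopt n j)) (Fin (nopt n k)) F) (b : Λ j k),
      elt F ψ i j X a * elt F ψ j k Y b = elt F ψ i k (X * Y) (mu i j k a b))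
    (hmul0 : ∀ (i j s t : Option I), j ≠ s →
      ∀ (X : Matrix (Fin (nopt n i)) (Fin (nopt n j)) F) (a : Λ i j)
        (Y : Matrix (Fin (nopt n s)) (Fin (nopt n t)) F) (b : Λ s t),
      elt F ψ i j X a * elt F ψ s t Y b = 0)
    {i j k : Option I} (hik : i ≠ k) (X : Matrix (Fin (nopt n i)) (Fin (nopt n j)) F)
    (a : Λ i j) (Y : Matrix (Fin (nopt n j)) (Fin (nopt n k)) F) (b : Λ j k) :
    elt F ψ i j X a * elt F ψ j k Y b - elt F ψ j k Y b * elt F ψ i j X a =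
      elt F ψ i k (X * Y) (mu i j k a b) := by
  rw [hmul, hmul0 j k i j hik.symm, sub_zero]

theorem commutator_elt_one
    (one : ∀ i : I, Λ (some i) (some i))
    (hone_left : ∀ (i : I) (j : Option I) (a : Λ (some i) j),
      mu (some i) (some i) j (one i) a = a)
    (hone_right : ∀ (i : I) (j : Option I) (a : Λ j (some i)),
      mu j (some i) (some i) a (one i) = a)
    (hmul : ∀ (i j k : Option I) (X : Matrix (Fin (nopt n i)) (Fin (nopt n j)) F)
      (a : Λ i j) (Y : Matrix (Fin (nopt n j)) (Fin (nopt n k)) F) (b : Λ j k),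
      elt F ψ i j X a * elt F ψ j k Y b = elt F ψ i k (X * Y) (mu i j k a b))
    {i : I} (X Y : Matrix (Fin (n i)) (Fin (n i)) F) (a : Λ (some i) (some i)) :
    elt F ψ (some i) (some i) X (one i) * elt F ψ (some i) (some i) Y a -
        elt F ψ (some i) (some i) Y a * elt F ψ (some i) (some i) X (one i) =
      elt F ψ (some i) (some i) (X * Y - Y * X) a := by
  rw [hmul, hmul, hone_left, hone_right, ← eltLinearMap_apply, ← eltLinearMap_apply,
    ← eltLinearMap_apply, map_sub]

theorem lieGens_subset_commutatorSpan
    (hn2 : ∀ i : I, 2 ≤ n i) (hn3 : ringChar F = 2 → ∀ i : I, 3 ≤ n i)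
    (one : ∀ i : I, Λ (some i) (some i))
    (hone_left : ∀ (i : I) (j : Option I) (a : Λ (some i) j),
      mu (some i) (some i) j (one i) a = a)
    (hone_right : ∀ (i : I) (j : Option I) (a : Λ j (some i)),
      mu j (some i) (some i) a (one i) = a)
    (hmul : ∀ (i j k : Option I) (X : Matrix (Fin (nopt n i)) (Fin (nopt n j)) F)
      (a : Λ i j) (Y : Matrix (Fin (nopt n j)) (Fin (nopt n k)) F) (b : Λ j k),
      elt F ψ i j X a * elt F ψ j k Y b = elt F ψ i k (X * Y) (mu i j k a b))
    (hmul0 : ∀ (i j s t : Option I), j ≠ s →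
      ∀ (X : Matrix (Fin (nopt n i)) (Fin (nopt n j)) F) (a : Λ i j)
        (Y : Matrix (Fin (nopt n s)) (Fin (nopt n t)) F) (b : Λ s t),
      elt F ψ i j X a * elt F ψ s t Y b = 0) :
    lieGens F ψ ⊆ commutatorSpan F (lieGens F ψ) := by
  have hC : ∀ x ∈ lieGens F ψ, ∀ y ∈ lieGens F ψ,
      x * y - y * x ∈ commutatorSpan F (lieGens F ψ) :=
    fun x hx y hy => Submodule.subset_span ⟨x, hx, y, hy, rfl⟩
  have hcard (i : I) : 1 < Fintype.card (Fin (nopt n (some i))) :=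
    (Fintype.card_fin _).symm ▸ hn2 i
  rintro _ (⟨i, j, X, a, hij, rfl⟩ | ⟨i, X, a, hX, rfl⟩)
  · rcases j with _ | j
    · obtain ⟨i, rfl⟩ := Option.ne_none_iff_exists'.1 hij
      refine elt_mem_of_mem_span F ψ _ ?_ (Matrix.mem_span_traceZero_mul (hcard i) X)
      rintro _ ⟨Y, X', hY, rfl⟩
      simpa only [commutator_elt_of_ne F mu ψ hmul hmul0 hij, hone_left] using
        hC _ (elt_mem_lieGens_of_trace_eq_zero F ψ hY (one i)) _
          (elt_mem_lieGens_of_ne F ψ hij X' a)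
    · refine elt_mem_of_mem_span F ψ _ ?_ (Matrix.mem_span_mul_traceZero (hcard j) X)
      rintro _ ⟨X', Y, hY, rfl⟩
      simpa only [commutator_elt_of_ne F mu ψ hmul hmul0 hij, hone_right] using
        hC _ (elt_mem_lieGens_of_ne F ψ hij X' a) _
          (elt_mem_lieGens_of_trace_eq_zero F ψ hY (one j))
  · refine elt_mem_of_mem_span F ψ _ ?_ (Matrix.mem_span_commutators_of_trace_eq_zero
      (hcard i) (fun h => by simpa using hn3 h i) hX)
    rintro _ ⟨Y, Z, hY, hZ, rfl⟩
    simpa only [commutator_elt_one F mu ψ one hone_left hone_right hmul] using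
      hC _ (elt_mem_lieGens_of_trace_eq_zero F ψ hY (one i)) _
        (elt_mem_lieGens_of_trace_eq_zero F ψ hZ a)

end Blocks

theorem Lsub_perfect
    -- sizes: `n_i ≥ 2`, and `n_i ≥ 3` in characteristic 2
    (hn2 : ∀ i : I, 2 ≤ n i) (hn3 : ringChar F = 2 → ∀ i : I, 3 ≤ n i)
    -- each `Λ(i,i)`, `i ∈ I`, has an identity element `1_i`
    (one : ∀ i : I, Λ (some i) (some i))
    (hone_left : ∀ (i : I) (j : Option I) (a : Λ (some i) j),
      mu (some i) (some i) j (one i) a = a)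
    (hone_right : ∀ (i : I) (j : Option I) (a : Λ j (some i)),
      mu j (some i) (some i) a (one i) = a)
    -- the product of `A`: `(X ⊗ λ)(Y ⊗ μ) = XY ⊗ λμ` for matching inner indices …
    (hmul : ∀ (i j k : Option I) (X : Matrix (Fin (nopt n i)) (Fin (nopt n j)) F)
      (a : Λ i j) (Y : Matrix (Fin (nopt n j)) (Fin (nopt n k)) F) (b : Λ j k),
      elt F ψ i j X a * elt F ψ j k Y b = elt F ψ i k (X * Y) (mu i j k a b))
    -- … and `0` otherwise
    (hmul0 : ∀ (i j s t : Option I), j ≠ s →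
      ∀ (X : Matrix (Fin (nopt n i)) (Fin (nopt n j)) F) (a : Λ i j)
        (Y : Matrix (Fin (nopt n s)) (Fin (nopt n t)) F) (b : Λ s t),
      elt F ψ i j X a * elt F ψ s t Y b = 0)
    :
    Submodule.span F
        {z : A | ∃ x ∈ Lsub F ψ, ∃ y ∈ Lsub F ψ, z = x * y - y * x}
      = Lsub F ψ := by
  rw [Lsub_eq_lieClosure]
  exact commutatorSpan_lieClosure_eq
    (lieGens_subset_commutatorSpan F mu ψ hn2 hn3 one hone_left hone_right hmul hmul0)
end

section
/- In the matrix-decomposition setting below, for every i ∈ I one has [V_ii ⊗ Λ(i,i), V_ii ⊗ Λ(i,i)] ⊆ L, i.e. the commutator of any two elements of V_ii ⊗ Λ(i,i) lies in L. -/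
/-! Statement 12: in the matrix-decomposition setting, `[V_ii ⊗ Λ(i,i), V_ii ⊗ Λ(i,i)] ⊆ L` for all `i ∈ I`. -/

open scoped TensorProduct DirectSum

universe u v w

variable (F : Type u) [Field F] [IsAlgClosed F]
  {I : Type} [Fintype I] [DecidableEq I] [Nonempty I] {n : I → ℕ}
  {Λ : Option I → Option I → Type v}
  [∀ i j, AddCommGroup (Λ i j)] [∀ i j, Module F (Λ i j)]
  {A : Type w} [NonUnitalRing A] [Module F A] [SMulCommClass F A A] [IsScalarTower F A A]

variable (mu : ∀ i j k : Option I, Λ i j →ₗ[F] Λ j k →ₗ[F] Λ i k)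
  (ψ : (⨁ p : Option I × Option I,
      Matrix (Fin (nopt n p.1)) (Fin (nopt n p.2)) F ⊗[F] Λ p.1 p.2) ≃ₗ[F] A)

/-!
For `k ≠ l`, `[E_lk ⊗ a, E_kl ⊗ b] = E_ll ⊗ ab - E_kk ⊗ ba`, and `(E_ll - E_kk) ⊗ ab` is a
traceless generator of `L`, so `E_kk ⊗ (ab - ba) ∈ L`. For arbitrary `X, Y` put
`t = tr XY = tr YX`; then
`[X ⊗ a, Y ⊗ b] = (XY - t E_kk) ⊗ ab - (YX - t E_kk) ⊗ ba + t E_kk ⊗ (ab - ba)`,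
a sum of two traceless generators and an element of `L`. Bilinearity extends this from pure
tensors to all of `V_ii ⊗ Λ(i,i)`.
-/

theorem TensorProduct.commutator_mem_of_forall_tmul {R M N B : Type*} [CommSemiring R]
    [AddCommMonoid M] [Module R M] [AddCommMonoid N] [Module R N]
    [NonUnitalRing B] [Module R B] [SMulCommClass R B B] [IsScalarTower R B B]
    (f : M ⊗[R] N →ₗ[R] B) (J : Submodule R B)
    (h : ∀ (m : M) (n : N) (m' : M) (n' : N),
      f (m ⊗ₜ n) * f (m' ⊗ₜ n') - f (m' ⊗ₜ n') * f (m ⊗ₜ n) ∈ J)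
    (u v : M ⊗[R] N) : f u * f v - f v * f u ∈ J := by
  let C := (LinearMap.mul R B - (LinearMap.mul R B).flip).compl₁₂ f f
  change C u v ∈ J
  induction u using TensorProduct.induction_on with
  | zero => simp
  | add u₁ u₂ h₁ h₂ => rw [map_add, LinearMap.add_apply]; exact J.add_mem h₁ h₂
  | tmul m n =>
    induction v using TensorProduct.induction_on with
    | zero => simp
    | add v₁ v₂ h₁ h₂ => rw [map_add]; exact J.add_mem h₁ h₂
    | tmul m' n' => exact h m n m' n'

section Lsub

variable {F} {ψ}

omit [IsAlgClosed F] [Fintype I] [Nonempty I] [SMulCommClass F A A] [IsScalarTower F A A]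

theorem elt_sub_left (i j : Option I) (X Y : Matrix (Fin (nopt n i)) (Fin (nopt n j)) F)
    (a : Λ i j) : elt F ψ i j (X - Y) a = elt F ψ i j X a - elt F ψ i j Y a := by
  simp [elt, emb, TensorProduct.sub_tmul]

theorem elt_sub_right (i j : Option I) (X : Matrix (Fin (nopt n i)) (Fin (nopt n j)) F)
    (a b : Λ i j) : elt F ψ i j X (a - b) = elt F ψ i j X a - elt F ψ i j X b := by
  simp [elt, emb, TensorProduct.tmul_sub]

theorem elt_smul_left (i j : Option I) (c : F) (X : Matrix (Fin (nopt n i)) (Fin (nopt n j)) F)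
    (a : Λ i j) : elt F ψ i j (c • X) a = c • elt F ψ i j X a := by
  simp only [elt, emb, ← TensorProduct.smul_tmul', map_smul]

theorem commutator_mem_Lsub {x y : A} (hx : x ∈ Lsub F ψ) (hy : y ∈ Lsub F ψ) :
    x * y - y * x ∈ Lsub F ψ := by
  rw [Lsub, Submodule.mem_sInf] at *
  exact fun J hJ => hJ.2 x (hx J hJ) y (hy J hJ)

theorem elt_mem_Lsub_of_trace_eq_zero {i : I} {X : Matrix (Fin (n i)) (Fin (n i)) F}
    (hX : X.trace = 0) (a : Λ (some i) (some i)) :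
    elt F ψ (some i) (some i) X a ∈ Lsub F ψ := by
  rw [Lsub, Submodule.mem_sInf]
  exact fun J hJ => hJ.1 (Or.inr ⟨i, X, a, hX, rfl⟩)

variable {mu} {i : I}
  (hmul : ∀ (X : Matrix (Fin (n i)) (Fin (n i)) F) (a : Λ (some i) (some i))
    (Y : Matrix (Fin (n i)) (Fin (n i)) F) (b : Λ (some i) (some i)),
    elt F ψ (some i) (some i) X a * elt F ψ (some i) (some i) Y b
      = elt F ψ (some i) (some i) (X * Y) (mu (some i) (some i) (some i) a b))
include hmul

theorem elt_single_mul_sub_mul_mem_Lsub {k l : Fin (n i)} (hkl : k ≠ l)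
    (a b : Λ (some i) (some i)) :
    elt F ψ (some i) (some i) (Matrix.single k k 1)
      (mu (some i) (some i) (some i) a b - mu (some i) (some i) (some i) b a) ∈ Lsub F ψ := by
  have hbracket := commutator_mem_Lsub (ψ := ψ)
    (elt_mem_Lsub_of_trace_eq_zero (Matrix.trace_single_eq_of_ne l k (1 : F) hkl.symm) a)
    (elt_mem_Lsub_of_trace_eq_zero (Matrix.trace_single_eq_of_ne k l (1 : F) hkl) b)
  rw [hmul, hmul, Matrix.single_mul_single_same, Matrix.single_mul_single_same,
    one_mul] at hbracket
  have htraceless : (Matrix.single l l (1 : F) - Matrix.single k k 1).trace = 0 := by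
    rw [Matrix.trace_sub, Matrix.trace_single_eq_same, Matrix.trace_single_eq_same, sub_self]
  have hdiag := elt_mem_Lsub_of_trace_eq_zero (ψ := ψ) htraceless
    (mu (some i) (some i) (some i) a b)
  convert (Lsub F ψ).sub_mem hbracket hdiag using 1
  rw [elt_sub_right, elt_sub_left]
  abel

theorem elt_commutator_mem_Lsub (k : Fin (n i))
    (hk : ∀ a b : Λ (some i) (some i), elt F ψ (some i) (some i) (Matrix.single k k 1)
      (mu (some i) (some i) (some i) a b - mu (some i) (some i) (some i) b a) ∈ Lsub F ψ)
    (X : Matrix (Fin (n i)) (Fin (n i)) F) (a : Λ (some i) (some i))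
    (Y : Matrix (Fin (n i)) (Fin (n i)) F) (b : Λ (some i) (some i)) :
    elt F ψ (some i) (some i) X a * elt F ψ (some i) (some i) Y b
      - elt F ψ (some i) (some i) Y b * elt F ψ (some i) (some i) X a ∈ Lsub F ψ := by
  set t := (X * Y).trace
  have hXY : (X * Y - t • Matrix.single k k 1).trace = 0 := by
    simp [Matrix.trace_sub, t]
  have hYX : (Y * X - t • Matrix.single k k 1).trace = 0 := by
    simp [Matrix.trace_sub, t, Matrix.trace_mul_comm Y X]
  convert (Lsub F ψ).add_mem
    ((Lsub F ψ).sub_mem (elt_mem_Lsub_of_trace_eq_zero hXY (mu (some i) (some i) (some i) a b))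
      (elt_mem_Lsub_of_trace_eq_zero hYX (mu (some i) (some i) (some i) b a)))
    ((Lsub F ψ).smul_mem t (hk a b)) using 1
  rw [hmul, hmul, elt_sub_left, elt_sub_left, elt_smul_left, elt_smul_left, elt_sub_right,
    smul_sub]
  abel

end Lsub

theorem commutator_Vii_Vii_mem_Lsub
    -- sizes: `n_i ≥ 2`, and `n_i ≥ 3` in characteristic 2
    (hn2 : ∀ i : I, 2 ≤ n i)
    -- the product of `A`: `(X ⊗ λ)(Y ⊗ μ) = XY ⊗ λμ` for matching inner indices …
    (hmul : ∀ (i j k : Option I) (X : Matrix (Fin (nopt n i)) (Fin (nopt n j)) F)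
      (a : Λ i j) (Y : Matrix (Fin (nopt n j)) (Fin (nopt n k)) F) (b : Λ j k),
      elt F ψ i j X a * elt F ψ j k Y b = elt F ψ i k (X * Y) (mu i j k a b))
    :
    -- the commutator of any two elements of `V_ii ⊗ Λ(i,i)`, `i ∈ I`, lies in `L`
    ∀ (i : I) (u v : Matrix (Fin (n i)) (Fin (n i)) F ⊗[F] Λ (some i) (some i)),
      emb F ψ (some i, some i) u * emb F ψ (some i, some i) v
        - emb F ψ (some i, some i) v * emb F ψ (some i, some i) u ∈ Lsub F ψ := by
  intro i
  have hmul_ii := hmul (some i) (some i) (some i)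
  have : Nontrivial (Fin (n i)) := Fin.nontrivial_iff_two_le.mpr (hn2 i)
  obtain ⟨k, l, hkl⟩ := exists_pair_ne (Fin (n i))
  exact TensorProduct.commutator_mem_of_forall_tmul
    (ψ.toLinearMap ∘ₗ DirectSum.lof F (Option I × Option I)
      (fun q => Matrix (Fin (nopt n q.1)) (Fin (nopt n q.2)) F ⊗[F] Λ q.1 q.2) (some i, some i))
    (Lsub F ψ)
    (elt_commutator_mem_Lsub hmul_ii k (elt_single_mul_sub_mul_mem_Lsub hmul_ii hkl))
end
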